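/- arXiv:1309.5550 — 11 statements merged into one kernel-verified Lean document; each statement's English description precedes it below -/
import Mathlib

section
/- Let n ≥ 1, D > 0, L > 0, ε > 0, and let f₀(x) := (L/2) Σ_{i=1}^n (x^{(i)})² on ℝⁿ. Suppose k ≥ 1 satisfies k + 1 ≤ (1/2)·min{n, L D²/(2ε)}. Then for every choice of indices i₀, i₁, …, i_k ∈ {1,…,n} and every point y in the convex hull conv{D e_{i₀}, D e_{i₁}, …, D e_{i_k}}, one has f₀(y) − min_{x∈Δ} f₀(x) ≥ ε. (This is the key quantitative fact behind the lower complexity bound for linear-optimization-based methods on smooth convex problems: any method whose iterates lie in the convex hull of k+1 vertices returned by a linear optimization oracle over Δ cannot reach accuracy ε in k iterations when k is below this threshold.) -/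
/-- For `f₀ x = (L/2) ∑ᵢ (x i)²`, if `k ≥ 1` satisfies
`k + 1 ≤ (1/2) min{n, L D²/(2ε)}`, then for any indices `i₀,…,i_k` and any
`y ∈ conv{D e_{i₀},…, D e_{i_k}}`, one has `f₀ y − min_{x∈Δ} f₀ x ≥ ε`. -/
theorem stmt2 (n : ℕ) (hn : 1 ≤ n) (D L ε : ℝ) (hD : 0 < D) (hL : 0 < L) (hε : 0 < ε)
    (f₀ : (Fin n → ℝ) → ℝ)
    (hf₀ : ∀ x, f₀ x = L / 2 * ∑ i, (x i) ^ 2)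
    (Δ : Set (Fin n → ℝ))
    (hΔ : Δ = {x | (∑ i, x i) = D ∧ ∀ i, 0 ≤ x i})
    (k : ℕ) (hk : 1 ≤ k)
    (hbound : (k : ℝ) + 1 ≤ (1 / 2) * min (n : ℝ) (L * D ^ 2 / (2 * ε)))
    (idx : Fin (k + 1) → Fin n)
    (y : Fin n → ℝ)
    (hy : y ∈ convexHull ℝ {v : Fin n → ℝ | ∃ j, v = D • (Pi.single (idx j) 1 : Fin n → ℝ)}) :
    f₀ y - sInf (f₀ '' Δ) ≥ ε := by
  set T : Finset (Fin n) := Finset.image idx Finset.univ with hT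
  -- the convex set C containing all the vertices
  set C : Set (Fin n → ℝ) :=
    {x | (∑ i, x i) = D ∧ (∀ i, 0 ≤ x i) ∧ ∀ i ∉ T, x i = 0} with hC
  have hconv : Convex ℝ C := by
    intro x hx z hz a b ha hb hab
    obtain ⟨hx1, hx2, hx3⟩ := hx
    obtain ⟨hz1, hz2, hz3⟩ := hz
    refine ⟨?_, ?_, ?_⟩
    · simp only [Pi.add_apply, Pi.smul_apply, smul_eq_mul]
      rw [Finset.sum_add_distrib, ← Finset.mul_sum, ← Finset.mul_sum, hx1, hz1]
      nlinarith
    · intro i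
      have := hx2 i; have := hz2 i
      simp only [Pi.add_apply, Pi.smul_apply, smul_eq_mul]
      nlinarith
    · intro i hi
      simp only [Pi.add_apply, Pi.smul_apply, smul_eq_mul, hx3 i hi, hz3 i hi]
      ring
  have hsub : {v : Fin n → ℝ | ∃ j, v = D • (Pi.single (idx j) 1 : Fin n → ℝ)} ⊆ C := by
    rintro v ⟨j, rfl⟩
    refine ⟨?_, ?_, ?_⟩
    · simp [Pi.single_apply, Finset.sum_ite_eq']
    · intro i
      simp only [Pi.smul_apply, smul_eq_mul, Pi.single_apply]
      split <;> simp [hD.le]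
    · intro i hi
      have : i ≠ idx j := by
        intro h; exact hi (by simp [hT, h])
      simp [Pi.single_apply, this.symm]
  have hyC : y ∈ C := convexHull_min hsub hconv hy
  obtain ⟨hy1, hy2, hy3⟩ := hyC
  -- Cauchy-Schwarz
  have hsumT : ∑ i ∈ T, y i = D := by
    rw [← hy1]
    exact Finset.sum_subset (Finset.subset_univ T) (fun i _ hi => hy3 i hi)
  have hcard : (T.card : ℝ) ≤ (k : ℝ) + 1 := by
    have : T.card ≤ k + 1 := by
      calc T.card ≤ (Finset.univ : Finset (Fin (k+1))).card := Finset.card_image_le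
      _ = k + 1 := by simp
    exact_mod_cast this
  have hCS : D ^ 2 ≤ ((k : ℝ) + 1) * ∑ i, (y i) ^ 2 := by
    have h1 : (∑ i ∈ T, y i) ^ 2 ≤ (T.card : ℝ) * ∑ i ∈ T, (y i) ^ 2 := by
      exact_mod_cast sq_sum_le_card_mul_sum_sq (s := T) (f := y)
    have h2 : ∑ i ∈ T, (y i) ^ 2 ≤ ∑ i, (y i) ^ 2 :=
      Finset.sum_le_sum_of_subset_of_nonneg (Finset.subset_univ T)
        (fun i _ _ => sq_nonneg _)
    have h3 : (0:ℝ) ≤ ∑ i ∈ T, (y i) ^ 2 := Finset.sum_nonneg fun i _ => sq_nonneg _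
    calc D ^ 2 = (∑ i ∈ T, y i) ^ 2 := by rw [hsumT]
    _ ≤ (T.card : ℝ) * ∑ i ∈ T, (y i) ^ 2 := h1
    _ ≤ ((k : ℝ) + 1) * ∑ i ∈ T, (y i) ^ 2 := by nlinarith
    _ ≤ ((k : ℝ) + 1) * ∑ i, (y i) ^ 2 := by nlinarith
  -- bounds on the infimum
  have hnpos : (0:ℝ) < n := by exact_mod_cast hn
  have hxbar : (fun _ : Fin n => D / n) ∈ Δ := by
    rw [hΔ]
    constructor
    · rw [Finset.sum_const]
      simp only [Finset.card_univ, Fintype.card_fin, nsmul_eq_mul]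
      field_simp
    · intro i; positivity
  have hne : (f₀ '' Δ).Nonempty := ⟨_, Set.mem_image_of_mem f₀ hxbar⟩
  have hbdd : BddBelow (f₀ '' Δ) := by
    refine ⟨0, ?_⟩
    rintro _ ⟨x, _, rfl⟩
    rw [hf₀]
    positivity
  have hinf_nonneg : (0:ℝ) ≤ sInf (f₀ '' Δ) :=
    le_csInf hne (by rintro _ ⟨x, _, rfl⟩; rw [hf₀]; positivity)
  have hinf_le : sInf (f₀ '' Δ) ≤ L * D ^ 2 / (2 * n) := by
    have h := csInf_le hbdd (Set.mem_image_of_mem f₀ hxbar)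
    have : f₀ (fun _ : Fin n => D / n) = L * D ^ 2 / (2 * n) := by
      rw [hf₀, Finset.sum_const]
      simp only [Finset.card_univ, Fintype.card_fin, nsmul_eq_mul]
      field_simp
    linarith [this ▸ h]
  -- split hbound
  have hb1 : 2 * ((k : ℝ) + 1) ≤ (n : ℝ) := by
    have := min_le_left (n : ℝ) (L * D ^ 2 / (2 * ε))
    linarith
  have hb2 : 4 * ε * ((k : ℝ) + 1) ≤ L * D ^ 2 := by
    have h := min_le_right (n : ℝ) (L * D ^ 2 / (2 * ε))
    have heq : (1:ℝ)/2 * (L * D ^ 2 / (2 * ε)) = L * D ^ 2 / (4 * ε) := by ring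
    have : (k : ℝ) + 1 ≤ L * D ^ 2 / (4 * ε) := by nlinarith [heq]
    rw [le_div_iff₀ (by positivity)] at this
    linarith
  -- finish
  have hKpos : (0:ℝ) < (k : ℝ) + 1 := by positivity
  have hSnn : (0:ℝ) ≤ ∑ i, (y i) ^ 2 := Finset.sum_nonneg fun i _ => sq_nonneg _
  have h2n : sInf (f₀ '' Δ) * (2 * n) ≤ L * D ^ 2 := by
    have := (le_div_iff₀ (by positivity : (0:ℝ) < 2 * n)).mp hinf_le
    linarith
  have h4K : sInf (f₀ '' Δ) * (4 * ((k:ℝ)+1)) ≤ L * D ^ 2 := by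
    nlinarith
  rw [hf₀]
  nlinarith [mul_le_mul_of_nonneg_left hCS hL.le]
end

section
/- Let n ≥ 1, D > 0, M > 0, ε > 0, and let f̂₀(x) := M (Σ_{i=1}^n (x^{(i)})²)^{1/2} = M‖x‖₂ on ℝⁿ. Then: (i) min over the scaled simplex Δ of f̂₀ equals M D/√n, attained at (D/n,…,D/n); (ii) for every nonempty S ⊆ {1,…,n} with |S| = q, the minimum of f̂₀ over conv{D e_i : i ∈ S} equals M D/√q; and (iii) if k ≥ 1 satisfies k + 1 ≤ (1/4)·min{n, M² D²/ε²}, then for every choice of indices i₀, …, i_k ∈ {1,…,n} and every y ∈ conv{D e_{i₀}, …, D e_{i_k}}, one has f̂₀(y) − M D/√n ≥ ε. -/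
section auxstmt3

variable {n : ℕ}

private def faceSet (D : ℝ) (S : Finset (Fin n)) : Set (Fin n → ℝ) :=
  {x | (∑ i, x i) = D ∧ (∀ i, 0 ≤ x i) ∧ ∀ i ∉ S, x i = 0}

private lemma faceSet_convex (D : ℝ) (S : Finset (Fin n)) : Convex ℝ (faceSet D S) := by
  rintro x ⟨hxs, hx0, hxS⟩ y ⟨hys, hy0, hyS⟩ a b ha hb hab
  refine ⟨?_, fun i => ?_, fun i hi => ?_⟩
  · simp only [Pi.add_apply, Pi.smul_apply, smul_eq_mul]
    rw [Finset.sum_add_distrib, ← Finset.mul_sum, ← Finset.mul_sum, hxs, hys,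
      ← add_mul, hab, one_mul]
  · have := hx0 i; have := hy0 i
    simp only [Pi.add_apply, Pi.smul_apply, smul_eq_mul]
    nlinarith
  · simp [hxS i hi, hyS i hi]

private lemma vertex_mem_faceSet {D : ℝ} (hD : 0 ≤ D) {S : Finset (Fin n)} {i : Fin n}
    (hi : i ∈ S) : (D • (Pi.single i 1 : Fin n → ℝ)) ∈ faceSet D S := by
  refine ⟨?_, fun j => ?_, fun j hj => ?_⟩
  · simp [Pi.single_apply, Finset.sum_ite_eq']
  · simp only [Pi.smul_apply, Pi.single_apply, smul_eq_mul]
    split <;> simp [hD]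
  · have : j ≠ i := fun h => hj (h ▸ hi)
    simp [Pi.single_apply, this]

private lemma hull_subset_faceSet {D : ℝ} (hD : 0 ≤ D) (S : Finset (Fin n)) :
    convexHull ℝ {v : Fin n → ℝ | ∃ i ∈ S, v = D • (Pi.single i 1 : Fin n → ℝ)} ⊆
      faceSet D S := by
  apply convexHull_min _ (faceSet_convex D S)
  rintro v ⟨i, hi, rfl⟩
  exact vertex_mem_faceSet hD hi

private lemma sqrt_lb {D : ℝ} (S : Finset (Fin n)) {x : Fin n → ℝ}
    (hx : x ∈ faceSet D S) :
    D / Real.sqrt S.card ≤ Real.sqrt (∑ i, x i ^ 2) := by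
  obtain ⟨hsum, hx0, hsupp⟩ := hx
  have hD0 : 0 ≤ D := hsum ▸ Finset.sum_nonneg fun i _ => hx0 i
  have h1 : ∑ i ∈ S, x i = ∑ i, x i :=
    Finset.sum_subset (Finset.subset_univ S) (fun i _ hi => hsupp i hi)
  have h2 : ∑ i ∈ S, x i ^ 2 = ∑ i, x i ^ 2 :=
    Finset.sum_subset (Finset.subset_univ S) (fun i _ hi => by rw [hsupp i hi]; ring)
  have key : D ^ 2 ≤ (S.card : ℝ) * ∑ i, x i ^ 2 := by
    rw [← hsum, ← h1, ← h2]
    exact_mod_cast sq_sum_le_card_mul_sum_sq (s := S) (f := x)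
  rcases eq_or_lt_of_le (Nat.cast_nonneg (α := ℝ) S.card) with hc | hc
  · rw [← hc, Real.sqrt_zero, div_zero]; exact Real.sqrt_nonneg _
  · have heq : D / Real.sqrt S.card = Real.sqrt (D ^ 2 / S.card) := by
      rw [Real.sqrt_div (sq_nonneg D), Real.sqrt_sq hD0]
    rw [heq]
    exact Real.sqrt_le_sqrt ((div_le_iff₀ hc).mpr (by linarith [key]))

/-- The uniform point on a face. -/
private lemma uniform_mem_hull {D : ℝ} (hD : 0 ≤ D) {S : Finset (Fin n)} (hS : S.Nonempty) :
    (fun i => if i ∈ S then D / S.card else 0) ∈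
      convexHull ℝ {v : Fin n → ℝ | ∃ i ∈ S, v = D • (Pi.single i 1 : Fin n → ℝ)} := by
  have hcard : (0:ℝ) < S.card := by exact_mod_cast Finset.card_pos.mpr hS
  have hmem := Finset.centerMass_mem_convexHull (t := S) (w := fun _ => (1:ℝ))
    (z := fun i => D • (Pi.single i 1 : Fin n → ℝ))
    (s := {v : Fin n → ℝ | ∃ i ∈ S, v = D • (Pi.single i 1 : Fin n → ℝ)})
    (fun i _ => zero_le_one) (by simpa using hcard)
    (fun i hi => ⟨i, hi, rfl⟩)
  convert hmem using 1
  rw [Finset.centerMass]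
  funext j
  simp only [Finset.sum_const, nsmul_eq_mul, mul_one, Pi.smul_apply, Finset.sum_apply,
    Pi.single_apply, smul_eq_mul]
  simp only [mul_ite, mul_one, mul_zero, one_mul]
  rw [Finset.sum_ite_eq S j (fun _ => D)]
  split <;> simp [div_eq_inv_mul]

private lemma uniform_sq_sum {D : ℝ} (hD : 0 ≤ D) (S : Finset (Fin n)) :
    Real.sqrt (∑ i, (if i ∈ S then D / S.card else 0) ^ 2) = D / Real.sqrt S.card := by
  have h2 : ∑ i, (if i ∈ S then D / (S.card:ℝ) else 0) ^ 2
      = S.card * (D / S.card) ^ 2 := by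
    have hite : ∀ i : Fin n, (if i ∈ S then D / (S.card:ℝ) else 0) ^ 2
        = if i ∈ S then (D / (S.card:ℝ)) ^ 2 else 0 := fun i => by split <;> simp
    rw [Finset.sum_congr rfl fun i _ => hite i, Finset.sum_ite_mem, Finset.univ_inter,
      Finset.sum_const, nsmul_eq_mul]
  rw [h2]
  rcases Finset.eq_empty_or_nonempty S with rfl | hS
  · simp
  · have hcard : (0:ℝ) < S.card := by exact_mod_cast Finset.card_pos.mpr hS
    have h3 : (S.card:ℝ) * (D / S.card) ^ 2 = D ^ 2 / S.card := by
      field_simp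
    rw [h3, Real.sqrt_div (sq_nonneg D), Real.sqrt_sq hD]

end auxstmt3

/-- For `g x = M (∑ᵢ (x i)²)^{1/2} = M ‖x‖₂` on `ℝⁿ`:
(i) the minimum of `g` over the scaled simplex `Δ` equals `M D/√n`, attained at `(D/n,…,D/n)`;
(ii) for every nonempty `S` with `|S| = q`, the minimum of `g` over `conv{D eᵢ : i ∈ S}` equals
`M D/√q`; (iii) if `k + 1 ≤ (1/4) min{n, M² D²/ε²}`, then for any indices `i₀,…,i_k` and any
`y ∈ conv{D e_{i₀},…, D e_{i_k}}`, one has `g y − M D/√n ≥ ε`. -/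
theorem stmt3 (n : ℕ) (hn : 1 ≤ n) (D M ε : ℝ) (hD : 0 < D) (hM : 0 < M) (hε : 0 < ε)
    (g : (Fin n → ℝ) → ℝ)
    (hg : ∀ x, g x = M * Real.sqrt (∑ i, (x i) ^ 2))
    (Δ : Set (Fin n → ℝ))
    (hΔ : Δ = {x | (∑ i, x i) = D ∧ ∀ i, 0 ≤ x i}) :
    (IsLeast (g '' Δ) (M * D / Real.sqrt n) ∧
      (fun _ : Fin n => D / n) ∈ Δ ∧
      g (fun _ : Fin n => D / n) = M * D / Real.sqrt n) ∧
    (∀ S : Finset (Fin n), S.Nonempty →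
      IsLeast (g '' convexHull ℝ {v : Fin n → ℝ | ∃ i ∈ S, v = D • (Pi.single i 1 : Fin n → ℝ)})
        (M * D / Real.sqrt S.card)) ∧
    (∀ k : ℕ, 1 ≤ k →
      (k : ℝ) + 1 ≤ (1 / 4) * min (n : ℝ) (M ^ 2 * D ^ 2 / ε ^ 2) →
      ∀ idx : Fin (k + 1) → Fin n,
      ∀ y ∈ convexHull ℝ {v : Fin n → ℝ | ∃ j, v = D • (Pi.single (idx j) 1 : Fin n → ℝ)},
        g y - M * D / Real.sqrt n ≥ ε) := by
  have hn0 : (0:ℝ) < n := by exact_mod_cast hn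
  -- general lower bound on a face
  have glb : ∀ (S : Finset (Fin n)) (x : Fin n → ℝ), x ∈ faceSet D S →
      M * D / Real.sqrt S.card ≤ g x := by
    intro S x hx
    rw [hg, mul_div_assoc]
    exact mul_le_mul_of_nonneg_left (sqrt_lb S hx) hM.le
  -- part (ii)
  have part2 : ∀ S : Finset (Fin n), S.Nonempty →
      IsLeast (g '' convexHull ℝ {v : Fin n → ℝ | ∃ i ∈ S, v = D • (Pi.single i 1 : Fin n → ℝ)})
        (M * D / Real.sqrt S.card) := by
    intro S hS
    constructor
    · refine ⟨_, uniform_mem_hull hD.le hS, ?_⟩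
      rw [hg, uniform_sq_sum hD.le, mul_div_assoc]
    · rintro b ⟨x, hx, rfl⟩
      exact glb S x (hull_subset_faceSet hD.le S hx)
  refine ⟨?_, part2, ?_⟩
  · -- part (i)
    have hmemΔ : (fun _ : Fin n => D / n) ∈ Δ := by
      rw [hΔ]
      refine ⟨?_, fun i => by positivity⟩
      rw [Finset.sum_const, Finset.card_univ, Fintype.card_fin, nsmul_eq_mul,
        mul_div_cancel₀ _ hn0.ne']
    have hval : g (fun _ : Fin n => D / n) = M * D / Real.sqrt n := by
      have : (fun _ : Fin n => D / n) = fun i : Fin n =>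
          if i ∈ (Finset.univ : Finset (Fin n)) then D / (Finset.univ : Finset (Fin n)).card else 0 := by
        funext i; simp
      rw [hg]
      have := uniform_sq_sum (n := n) hD.le Finset.univ
      simp only [Finset.mem_univ, if_true, Finset.card_univ, Fintype.card_fin] at this
      rw [this, mul_div_assoc]
    refine ⟨⟨⟨_, hmemΔ, hval⟩, ?_⟩, hmemΔ, hval⟩
    rintro b ⟨x, hx, rfl⟩
    rw [hΔ] at hx
    have : x ∈ faceSet D (Finset.univ : Finset (Fin n)) :=
      ⟨hx.1, hx.2, fun i hi => absurd (Finset.mem_univ i) hi⟩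
    have h := glb Finset.univ x this
    rwa [Finset.card_univ, Fintype.card_fin] at h
  · -- part (iii)
    intro k hk hkbound idx y hy
    set S : Finset (Fin n) := Finset.image idx Finset.univ with hSdef
    have hsub : {v : Fin n → ℝ | ∃ j, v = D • (Pi.single (idx j) 1 : Fin n → ℝ)} ⊆
        {v : Fin n → ℝ | ∃ i ∈ S, v = D • (Pi.single i 1 : Fin n → ℝ)} := by
      rintro v ⟨j, rfl⟩
      exact ⟨idx j, Finset.mem_image_of_mem idx (Finset.mem_univ j), rfl⟩
    have hyF : y ∈ faceSet D S :=
      hull_subset_faceSet hD.le S (convexHull_mono hsub hy)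
    have hgy : M * D / Real.sqrt S.card ≤ g y := glb S y hyF
    have hScard : (S.card : ℝ) ≤ (k:ℝ) + 1 := by
      have := Finset.card_image_le (f := idx) (s := Finset.univ)
      simp only [Finset.card_univ, Fintype.card_fin] at this
      exact_mod_cast this
    have hSne : S.Nonempty := ⟨idx 0, Finset.mem_image_of_mem idx (Finset.mem_univ 0)⟩
    have hScard1 : (1:ℝ) ≤ (S.card:ℝ) := by exact_mod_cast Finset.card_pos.mpr hSne
    set s := Real.sqrt ((k:ℝ) + 1) with hs
    have hspos : 0 < s := Real.sqrt_pos.mpr (by positivity)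
    have hsS : Real.sqrt S.card ≤ s := Real.sqrt_le_sqrt hScard
    have hsSpos : 0 < Real.sqrt S.card := Real.sqrt_pos.mpr (by linarith)
    have hb1 : 4 * ((k:ℝ) + 1) ≤ (n:ℝ) := by
      have := min_le_left (n:ℝ) (M ^ 2 * D ^ 2 / ε ^ 2); linarith [hkbound, this]
    have hb2 : 4 * ((k:ℝ) + 1) ≤ M ^ 2 * D ^ 2 / ε ^ 2 := by
      have := min_le_right (n:ℝ) (M ^ 2 * D ^ 2 / ε ^ 2); linarith [hkbound, this]
    have hsqn : 2 * s ≤ Real.sqrt n := by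
      have : Real.sqrt (4 * ((k:ℝ) + 1)) ≤ Real.sqrt n := Real.sqrt_le_sqrt hb1
      rwa [Real.sqrt_mul (by norm_num) _, show Real.sqrt 4 = 2 by
        rw [show (4:ℝ) = 2^2 by norm_num, Real.sqrt_sq (by norm_num)]] at this
    have hsMD : 2 * ε * s ≤ M * D := by
      have h2' := (le_div_iff₀ (by positivity : (0:ℝ) < ε ^ 2)).mp hb2
      have h : ((k:ℝ) + 1) ≤ (M * D / (2 * ε)) ^ 2 := by
        rw [div_pow, le_div_iff₀ (by positivity)]
        nlinarith [h2']
      have h5 := Real.sqrt_le_sqrt h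
      rw [Real.sqrt_sq (by positivity), ← hs, le_div_iff₀ (by positivity)] at h5
      linarith
    -- chain of inequalities
    have h1 : M * D / s ≤ M * D / Real.sqrt S.card :=
      div_le_div_of_nonneg_left (by positivity) hsSpos hsS
    have h2 : M * D / Real.sqrt n ≤ M * D / (2 * s) :=
      div_le_div_of_nonneg_left (by positivity) (by positivity) hsqn
    have h3 : ε ≤ M * D / (2 * s) := by
      rw [le_div_iff₀ (by positivity)]; nlinarith
    have h4 : M * D / s - M * D / (2 * s) = M * D / (2 * s) := by
      field_simp; ring
    have := hgy
    linarith [h1, h2, h3, this]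
end

section
/- Let n ≥ 1, D > 0, D̃ > 0, M > 0, ε > 0, and define f(x) := max_{y ∈ ℝⁿ, ‖y‖₂ ≤ D̃} M⟨x, y⟩ for x ∈ ℝⁿ. Then f(x) = M D̃ ‖x‖₂ for every x, and if k ≥ 1 satisfies k + 1 ≤ (1/4)·min{n, M² D̃² D²/ε²}, then for every choice of indices i₀, …, i_k ∈ {1,…,n} and every y ∈ conv{D e_{i₀}, …, D e_{i_k}} one has f(y) − min_{x∈Δ} f(x) ≥ ε, where min_{x∈Δ} f(x) = M D̃ D/√n. -/
open scoped RealInnerProductSpace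

/-!
By Cauchy–Schwarz, `f x = M D̃ ‖x‖`. A vector with coordinate sum `D` supported on `m`
coordinates has norm at least `D / √m` (Cauchy–Schwarz against the indicator of the support),
with equality for the uniform vector; so the minimum over `Δ` is `M D̃ D / √n`, while every
point of `conv{D e_{i₀}, …, D e_{i_k}}` has norm at least `D / √(k + 1)`. The bound on `k` makes
`M D̃ D (1 / √(k + 1) - 1 / √n) ≥ M D̃ D / (2 √(k + 1)) ≥ ε`.
-/

open Finset

theorem isGreatest_mul_inner_of_norm_le {E : Type*} [NormedAddCommGroup E]
    [InnerProductSpace ℝ E] (x : E) {M R : ℝ} (hM : 0 ≤ M) (hR : 0 ≤ R) :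
    IsGreatest {v : ℝ | ∃ y : E, ‖y‖ ≤ R ∧ v = M * ⟪x, y⟫} (M * R * ‖x‖) := by
  refine ⟨?_, ?_⟩
  · rcases eq_or_ne x 0 with rfl | hx
    · exact ⟨0, by simpa using hR, by simp⟩
    · have hx' : 0 < ‖x‖ := norm_pos_iff.2 hx
      refine ⟨(R / ‖x‖) • x, ?_, ?_⟩
      · rw [norm_smul, Real.norm_of_nonneg (by positivity), div_mul_cancel₀ _ hx'.ne']
      · rw [real_inner_smul_right, real_inner_self_eq_norm_sq]
        field_simp
  · rintro v ⟨y, hy, rfl⟩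
    calc M * ⟪x, y⟫ ≤ M * (‖x‖ * ‖y‖) := by gcongr; exact real_inner_le_norm x y
      _ ≤ M * (‖x‖ * R) := by gcongr
      _ = M * R * ‖x‖ := by ring

section EuclideanSpace

variable {ι : Type*} [Fintype ι]

theorem sum_le_sqrt_card_mul_norm (T : Finset ι) (y : EuclideanSpace ℝ ι)
    (hy : ∀ i ∉ T, y i = 0) : ∑ i, y i ≤ √(#T) * ‖y‖ := by
  have hsq : (∑ i, y i) ^ 2 ≤ #T * ‖y‖ ^ 2 := by
    rw [← sum_subset T.subset_univ fun i _ hi => hy i hi, EuclideanSpace.norm_sq_eq]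
    calc (∑ i ∈ T, y i) ^ 2 ≤ #T * ∑ i ∈ T, y i ^ 2 := sq_sum_le_card_mul_sum_sq
      _ ≤ #T * ∑ i, ‖y i‖ ^ 2 := by
        gcongr
        simp only [Real.norm_eq_abs, sq_abs]
        exact sum_le_sum_of_subset_of_nonneg T.subset_univ fun i _ _ => sq_nonneg _
  calc ∑ i, y i ≤ |∑ i, y i| := le_abs_self _
    _ ≤ √(#T * ‖y‖ ^ 2) := Real.abs_le_sqrt hsq
    _ = √(#T) * ‖y‖ := by rw [Real.sqrt_mul (by positivity), Real.sqrt_sq (norm_nonneg y)]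

theorem norm_toLp_const (c : ℝ) :
    ‖(WithLp.toLp 2 fun _ => c : EuclideanSpace ℝ ι)‖ = √(Fintype.card ι) * |c| := by
  rw [EuclideanSpace.norm_eq, ← Real.sqrt_sq_eq_abs, ← Real.sqrt_mul (Nat.cast_nonneg _)]
  simp [sum_const, card_univ, Real.norm_eq_abs, sq_abs]

theorem convexHull_smul_single_subset [DecidableEq ι] {κ : Type*} [Fintype κ]
    (D : ℝ) (idx : κ → ι) :
    convexHull ℝ {v : EuclideanSpace ℝ ι | ∃ j, v = D • EuclideanSpace.single (idx j) (1 : ℝ)} ⊆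
      {x | ∑ i, x i = D} ∩ {x | ∀ i ∉ univ.image idx, x i = 0} := by
  refine convexHull_min ?_ (Convex.inter ?_ ?_)
  · rintro v ⟨j, rfl⟩
    refine ⟨by simp, fun i hi => ?_⟩
    have : i ≠ idx j := fun h => hi (h ▸ mem_image_of_mem idx (mem_univ j))
    simp [this]
  · exact convex_hyperplane ⟨fun x y => by simp [sum_add_distrib], fun c x => by simp [mul_sum]⟩ D
  · simp only [Set.ofPred_forall]
    exact convex_iInter₂ fun i _ => convex_hyperplane ⟨fun x y => by simp, fun c x => by simp⟩ 0

end EuclideanSpace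

theorem isLeast_norm_image_simplex {n : ℕ} (hn : 0 < n) {D : ℝ} (hD : 0 ≤ D) :
    IsLeast (norm '' {x : EuclideanSpace ℝ (Fin n) | ∑ i, x i = D ∧ ∀ i, 0 ≤ x i}) (D / √n) := by
  have hn' : (0 : ℝ) < n := Nat.cast_pos.2 hn
  refine ⟨⟨WithLp.toLp 2 fun _ => D / n, ⟨?_, fun _ => by positivity⟩, ?_⟩, ?_⟩
  · simp [sum_const, mul_div_cancel₀ _ hn'.ne']
  · rw [norm_toLp_const, Fintype.card_fin, abs_of_nonneg (by positivity), mul_div_left_comm,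
      Real.sqrt_div_self, div_eq_mul_inv]
  · rintro _ ⟨x, ⟨hsum, -⟩, rfl⟩
    rw [div_le_iff₀ (Real.sqrt_pos.2 hn'), mul_comm, ← hsum]
    simpa using sum_le_sqrt_card_mul_norm univ x (by simp)

theorem le_div_sqrt_sub_div_sqrt {c ε m n : ℝ} (hc : 0 ≤ c) (hε : 0 < ε) (hm : 0 < m)
    (h : m ≤ 1 / 4 * min n (c ^ 2 / ε ^ 2)) : ε ≤ c / √m - c / √n := by
  have hsqrt_m : 0 < √m := Real.sqrt_pos.2 hm
  have two_sqrt_m : 2 * √m = √(4 * m) := by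
    rw [Real.sqrt_mul zero_le_four, show (4 : ℝ) = 2 ^ 2 by norm_num, Real.sqrt_sq zero_le_two]
  have hn : 2 * √m ≤ √n :=
    two_sqrt_m ▸ Real.sqrt_le_sqrt (by linarith [min_le_left n (c ^ 2 / ε ^ 2)])
  have hcε : 2 * √m ≤ c / ε := by
    rw [two_sqrt_m, ← Real.sqrt_sq (by positivity : 0 ≤ c / ε), div_pow]
    exact Real.sqrt_le_sqrt (by linarith [min_le_right n (c ^ 2 / ε ^ 2)])
  have hε_le : ε ≤ c / (2 * √m) := by
    rw [le_div_iff₀ (by positivity)]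
    rw [le_div_iff₀ hε] at hcε
    linarith
  have hn_le : c / √n ≤ c / (2 * √m) := div_le_div_of_nonneg_left hc (by positivity) hn
  have halve : c / √m = 2 * (c / (2 * √m)) := by field_simp
  linarith

/-- With `f x := max_{‖y‖₂ ≤ D̃} M ⟨x, y⟩` (the max is attained), one has
`f x = M D̃ ‖x‖₂` for all `x`, and if `k + 1 ≤ (1/4) min{n, M² D̃² D²/ε²}`, then for any
indices `i₀,…,i_k` and any `y ∈ conv{D e_{i₀},…, D e_{i_k}}`,
`f y − min_{x∈Δ} f x ≥ ε`, where `min_{x∈Δ} f x = M D̃ D/√n`. -/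
theorem stmt4 (n : ℕ) (hn : 1 ≤ n) (D Dt M ε : ℝ)
    (hD : 0 < D) (hDt : 0 < Dt) (hM : 0 < M) (hε : 0 < ε)
    (f : EuclideanSpace ℝ (Fin n) → ℝ)
    (hf : ∀ x, IsGreatest
      {v : ℝ | ∃ y : EuclideanSpace ℝ (Fin n), ‖y‖ ≤ Dt ∧ v = M * ⟪x, y⟫} (f x))
    (Δ : Set (EuclideanSpace ℝ (Fin n)))
    (hΔ : Δ = {x | (∑ i, x i) = D ∧ ∀ i, 0 ≤ x i}) :
    (∀ x, f x = M * Dt * ‖x‖) ∧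
    sInf (f '' Δ) = M * Dt * D / Real.sqrt n ∧
    (∀ k : ℕ, 1 ≤ k →
      (k : ℝ) + 1 ≤ (1 / 4) * min (n : ℝ) (M ^ 2 * Dt ^ 2 * D ^ 2 / ε ^ 2) →
      ∀ idx : Fin (k + 1) → Fin n,
      ∀ y ∈ convexHull ℝ
        {v : EuclideanSpace ℝ (Fin n) | ∃ j, v = D • EuclideanSpace.single (idx j) (1 : ℝ)},
        f y - sInf (f '' Δ) ≥ ε) := by
  have hMDt : 0 ≤ M * Dt := by positivity
  have hf_eq x : f x = M * Dt * ‖x‖ :=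
    (hf x).unique (isGreatest_mul_inner_of_norm_le x hM.le hDt.le)
  have hInf : sInf (f '' Δ) = M * Dt * D / √n := by
    have hleast := (monotone_mul_left_of_nonneg hMDt).map_isLeast
      (hΔ ▸ isLeast_norm_image_simplex hn hD.le)
    rw [Set.image_image, ← funext hf_eq, ← mul_div_assoc] at hleast
    exact hleast.csInf_eq
  refine ⟨hf_eq, hInf, fun k _ hk idx y hy => ?_⟩
  obtain ⟨hsum, hsupp⟩ := convexHull_smul_single_subset D idx hy
  have hcard : √(#(univ.image idx)) ≤ √(k + 1) := by
    gcongr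
    exact_mod_cast card_image_le.trans (card_univ.trans (Fintype.card_fin _)).le
  have hy_norm : M * Dt * D / √(k + 1) ≤ f y := by
    rw [hf_eq, mul_div_assoc]
    gcongr
    rw [div_le_iff₀ (by positivity)]
    calc D = ∑ i, y i := hsum.symm
      _ ≤ √(#(univ.image idx)) * ‖y‖ := sum_le_sqrt_card_mul_norm _ y hsupp
      _ ≤ √(k + 1) * ‖y‖ := by gcongr
      _ = ‖y‖ * √(k + 1) := mul_comm _ _
  have := le_div_sqrt_sub_div_sqrt (c := M * Dt * D) (m := k + 1) (n := n) (by positivity) hε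
    (by positivity) (by rwa [mul_pow, mul_pow])
  rw [hInf]
  linarith
end

section
/- Consider the conditional gradient method: given x₀ = y₀ ∈ X, for each k ≥ 1 let x_k ∈ argmin_{x ∈ X} f'(y_{k−1})(x) and let y_k ∈ X be any point with f(y_k) ≤ f((1−γ_k) y_{k−1} + γ_k x_k), where γ_k := 2/(k+1) (this covers both the stepsize α_k = 2/(k+1) and the exact line-search stepsize). Then for every k ≥ 1 and every x ∈ X, f(y_k) − f(x) ≤ (2L/(k(k+1))) Σ_{i=1}^k ‖x_i − y_{i−1}‖² ≤ 2 L D_X²/(k+1). In particular f(y_k) − min_{x∈X} f(x) ≤ 2 L D_X²/(k+1). -/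
/-!
Convexity gives the gradient inequality `f'(y)(u - y) ≤ f u - f y`, so the choice of `x_{n+1}`
and `L`-smoothness along the segment from `y_n` to `x_{n+1}` give the one-step bound
`f(y_{n+1}) - f u ≤ (1 - γ) (f(y_n) - f u) + (L/2) γ² ‖x_{n+1} - y_n‖²` with `γ = 2/(n+2)`.
Multiplying by `(n+1)(n+2)` turns it into a telescoping inequality for `n(n+1) (f(y_n) - f u)`,
and each summand is at most `D_X²`.
-/

open Finset

theorem ConvexOn.le_sub_of_hasFDerivAt {E : Type*} [NormedAddCommGroup E] [NormedSpace ℝ E]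
    {X : Set E} {f : E → ℝ} {f' : E →L[ℝ] ℝ} {a u : E} (hf : ConvexOn ℝ X f) (ha : a ∈ X)
    (hu : u ∈ X) (hd : HasFDerivAt f f' a) : f' (u - a) ≤ f u - f a := by
  have hline : HasDerivAt (f ∘ AffineMap.lineMap (k := ℝ) a u) (f' (u - a)) 0 := by
    have hd₀ : HasFDerivAt f f' (AffineMap.lineMap a u (0 : ℝ)) := by simpa using hd
    exact hd₀.comp_hasDerivAt 0 AffineMap.hasDerivAt_lineMap
  simpa [slope_def_field] using
    (hf.comp_affineMap (AffineMap.lineMap a u)).le_slope_of_hasDerivAt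
      (x := 0) (y := 1) (by simpa) (by simpa) one_pos hline

theorem ConvexOn.sub_le_of_conditionalGradient_step {E : Type*} [NormedAddCommGroup E]
    [NormedSpace ℝ E] {X : Set E} {f : E → ℝ} {f' : E →L[ℝ] ℝ} {L t : ℝ} {a u v : E}
    (hf : ConvexOn ℝ X f) (ha : a ∈ X) (hu : u ∈ X) (hv : v ∈ X) (hd : HasFDerivAt f f' a)
    (hsmooth : ∀ b ∈ X, f b ≤ f a + f' (b - a) + L / 2 * ‖b - a‖ ^ 2)
    (hvu : f' v ≤ f' u) (ht₀ : 0 ≤ t) (ht₁ : t ≤ 1) :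
    f ((1 - t) • a + t • v) - f u ≤ (1 - t) * (f a - f u) + L / 2 * t ^ 2 * ‖v - a‖ ^ 2 := by
  have hstep : (1 - t) • a + t • v - a = t • (v - a) := by module
  have hsm := hsmooth _ (hf.1 ha hv (sub_nonneg.2 ht₁) ht₀ (sub_add_cancel 1 t))
  rw [hstep, map_smul, smul_eq_mul, norm_smul, Real.norm_of_nonneg ht₀] at hsm
  have hlin : f' (v - a) ≤ f u - f a := calc
    f' (v - a) ≤ f' (u - a) := by simpa only [map_sub] using sub_le_sub_right hvu (f' a)
    _ ≤ f u - f a := hf.le_sub_of_hasFDerivAt ha hu hd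
  nlinarith [mul_le_mul_of_nonneg_left hlin ht₀]

theorem mul_succ_mul_le_sum_of_le_step {e s γ : ℕ → ℝ} {L : ℝ} (hL : 0 ≤ L)
    (hs : ∀ n, 0 ≤ s n) (hγ : ∀ k : ℕ, γ k = 2 / (k + 1))
    (he : ∀ n : ℕ, e (n + 1) ≤ (1 - γ (n + 1)) * e n + L / 2 * γ (n + 1) ^ 2 * s (n + 1))
    (k : ℕ) : k * (k + 1) * e k ≤ 2 * L * ∑ i ∈ Icc 1 k, s i := by
  induction k with
  | zero => simp
  | succ n ih =>
    have hn : (0 : ℝ) ≤ n := n.cast_nonneg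
    have hrec : ((n : ℝ) + 1) * (n + 2) * e (n + 1)
        ≤ n * (n + 1) * e n + 2 * L * ((n + 1) / (n + 2)) * s (n + 1) := by
      have h := mul_le_mul_of_nonneg_left (he n) (by positivity : (0 : ℝ) ≤ (n + 1) * (n + 2))
      rw [hγ] at h
      refine h.trans_eq ?_
      push_cast
      field_simp
      ring
    have hfrac : 2 * L * ((n + 1) / (n + 2)) * s (n + 1) ≤ 2 * L * s (n + 1) := by
      have : ((n : ℝ) + 1) / (n + 2) ≤ 1 := by rw [div_le_one (by positivity)]; linarith
      have := mul_le_mul_of_nonneg_right this (mul_nonneg (mul_nonneg zero_le_two hL) (hs (n + 1)))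
      linarith
    rw [sum_Icc_succ_top (by omega)]
    push_cast
    linarith

theorem stmt5_general {E : Type*} [NormedAddCommGroup E] [NormedSpace ℝ E]
    (X : Set E)
    (DX : ℝ) (hDX : IsGreatest {d : ℝ | ∃ a ∈ X, ∃ b ∈ X, d = ‖a - b‖} DX)
    (f : E → ℝ) (f' : E → E →L[ℝ] ℝ) (L : ℝ) (hL : 0 < L)
    (hconv : ConvexOn ℝ X f)
    (hder : ∀ a ∈ X, HasFDerivAt f (f' a) a)
    (hsmooth : ∀ a ∈ X, ∀ b ∈ X, f b ≤ f a + f' a (b - a) + L / 2 * ‖b - a‖ ^ 2)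
    (x y : ℕ → E) (γ : ℕ → ℝ) (hγ : ∀ k : ℕ, γ k = 2 / (k + 1))
    (hx0 : x 0 ∈ X) (hy0 : y 0 = x 0)
    (hxk : ∀ k ≥ 1, x k ∈ X ∧ ∀ z ∈ X, f' (y (k - 1)) (x k) ≤ f' (y (k - 1)) z)
    (hyk : ∀ k ≥ 1, y k ∈ X ∧ f (y k) ≤ f ((1 - γ k) • y (k - 1) + γ k • x k)) :
    ∀ k ≥ 1, ∀ u ∈ X,
      f (y k) - f u ≤
        2 * L / (k * (k + 1)) * ∑ i ∈ Finset.Icc 1 k, ‖x i - y (i - 1)‖ ^ 2 ∧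
      2 * L / (k * (k + 1)) * ∑ i ∈ Finset.Icc 1 k, ‖x i - y (i - 1)‖ ^ 2 ≤
        2 * L * DX ^ 2 / (k + 1) := by
  have hyX : ∀ k, y k ∈ X
    | 0 => hy0 ▸ hx0
    | k + 1 => (hyk (k + 1) k.succ_pos).1
  intro k hk u hu
  have hdescent : ∀ n : ℕ, f (y (n + 1)) - f u
      ≤ (1 - γ (n + 1)) * (f (y n) - f u) + L / 2 * γ (n + 1) ^ 2 * ‖x (n + 1) - y n‖ ^ 2 := by
    intro n
    obtain ⟨hxX, hxmin⟩ := hxk (n + 1) n.succ_pos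
    have hγ₀ : 0 ≤ γ (n + 1) := by rw [hγ]; positivity
    have hγ₁ : γ (n + 1) ≤ 1 := by rw [hγ, div_le_one (by positivity)]; push_cast; linarith
    rw [Nat.add_sub_cancel] at hxmin
    calc f (y (n + 1)) - f u ≤ f ((1 - γ (n + 1)) • y n + γ (n + 1) • x (n + 1)) - f u :=
          sub_le_sub_right (hyk (n + 1) n.succ_pos).2 _
      _ ≤ _ := hconv.sub_le_of_conditionalGradient_step (hyX n) hu hxX (hder _ (hyX n))
          (hsmooth _ (hyX n)) (hxmin u hu) hγ₀ hγ₁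
  have hrate := mul_succ_mul_le_sum_of_le_step (e := fun n ↦ f (y n) - f u)
    (s := fun i ↦ ‖x i - y (i - 1)‖ ^ 2) hL.le (fun _ ↦ by positivity) hγ hdescent k
  have hk₀ : (0 : ℝ) < k := by exact_mod_cast hk
  have hsum : ∑ i ∈ Finset.Icc 1 k, ‖x i - y (i - 1)‖ ^ 2 ≤ k * DX ^ 2 := by
    simpa using Finset.sum_le_card_nsmul _ _ (DX ^ 2) fun i hi ↦
      pow_le_pow_left₀ (norm_nonneg _)
        (hDX.2 ⟨_, (hxk i (Finset.mem_Icc.1 hi).1).1, _, hyX (i - 1), rfl⟩) 2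
  constructor
  · rw [div_mul_eq_mul_div, le_div_iff₀ (by positivity)]
    linarith
  · calc 2 * L / (k * (k + 1)) * ∑ i ∈ Finset.Icc 1 k, ‖x i - y (i - 1)‖ ^ 2
        ≤ 2 * L / (k * (k + 1)) * (k * DX ^ 2) := by gcongr
      _ = 2 * L * DX ^ 2 / (k + 1) := by field_simp

/-- Convergence of the classic conditional gradient method on a compact
convex set `X` of diameter `D_X`, for a convex `L`-smooth function `f`:
for all `k ≥ 1` and all `u ∈ X`,
`f(y_k) − f(u) ≤ (2L/(k(k+1))) ∑_{i=1}^k ‖x_i − y_{i−1}‖² ≤ 2 L D_X²/(k+1)`. -/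
theorem stmt5 {E : Type*} [NormedAddCommGroup E] [NormedSpace ℝ E] [FiniteDimensional ℝ E]
    (X : Set E) (hXcp : IsCompact X) (hXcv : Convex ℝ X) (hXne : X.Nonempty)
    (DX : ℝ) (hDX : IsGreatest {d : ℝ | ∃ a ∈ X, ∃ b ∈ X, d = ‖a - b‖} DX)
    (f : E → ℝ) (f' : E → E →L[ℝ] ℝ) (L : ℝ) (hL : 0 < L)
    (hconv : ConvexOn ℝ X f)
    (hder : ∀ a ∈ X, HasFDerivAt f (f' a) a)
    (hsmooth : ∀ a ∈ X, ∀ b ∈ X, f b ≤ f a + f' a (b - a) + L / 2 * ‖b - a‖ ^ 2)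
    (x y : ℕ → E) (γ : ℕ → ℝ) (hγ : ∀ k : ℕ, γ k = 2 / (k + 1))
    (hx0 : x 0 ∈ X) (hy0 : y 0 = x 0)
    (hxk : ∀ k ≥ 1, x k ∈ X ∧ ∀ z ∈ X, f' (y (k - 1)) (x k) ≤ f' (y (k - 1)) z)
    (hyk : ∀ k ≥ 1, y k ∈ X ∧ f (y k) ≤ f ((1 - γ k) • y (k - 1) + γ k • x k)) :
    ∀ k ≥ 1, ∀ u ∈ X,
      f (y k) - f u ≤
        2 * L / (k * (k + 1)) * ∑ i ∈ Finset.Icc 1 k, ‖x i - y (i - 1)‖ ^ 2 ∧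
      2 * L / (k * (k + 1)) * ∑ i ∈ Finset.Icc 1 k, ‖x i - y (i - 1)‖ ^ 2 ≤
        2 * L * DX ^ 2 / (k + 1) :=
  stmt5_general X DX hDX f f' L hL hconv hder hsmooth x y γ hγ hx0 hy0 hxk hyk
end

section
/- Consider the inexact smoothed conditional gradient iteration: let u₁ ≥ u₂ ≥ … > 0, let ε_k ≥ 0 be error bounds, let x₀ = y₀ ∈ X, and for k ≥ 1 let g_k ∈ ℝⁿ be any vector with ‖g_k − ∇f_{u_k}(y_{k−1})‖₂ ≤ ε_k, let x_k ∈ argmin_{x∈X} ⟨g_k, x⟩, and set y_k := (1−γ_k) y_{k−1} + γ_k x_k with γ_k := 2/(k+1). Then for every k ≥ 1 and every x ∈ X, f(y_k) − f(x) ≤ (2/(k(k+1))) Σ_{i=1}^k [ i ε_i D_X + i M u_i + (M√n/u_i) D_X² ]. -/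
/-!
For `u > 0` the smoothing `f_u` is a convex surrogate of `f`, within `M u` of it and
`(M√n/u)`-smooth on `X`. Measuring progress by `e_k := f_{u_k}(y_k) - f(x)`, one inexact
Frank–Wolfe step on `f_{u_k}` gives
`e_k ≤ (1 - γ_k) e_{k-1} + γ_k (ε_k D_X + M u_k) + γ_k² (M√n/(2u_k)) D_X²`,
where passing from `f_{u_k}(y_{k-1})` to `e_{k-1}` uses that `f_u` grows with `u` and
`u_k ≤ u_{k-1}`. With `γ_k = 2/(k+1)`, multiplying by `k(k+1)/2` makes this recursion
telescope, and `f ≤ f_{u_k}` turns the bound on `e_k` into one on `f(y_k) - f(x)`.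
-/

open scoped RealInnerProductSpace

open Finset

section FirstOrder

variable {E : Type*} [NormedAddCommGroup E]

theorem ConvexOn.add_le_of_hasFDerivAt [NormedSpace ℝ E] {s : Set E} {f : E → ℝ}
    {f' : E →L[ℝ] ℝ} {a b : E} (hf : ConvexOn ℝ s f) (ha : a ∈ s) (hb : b ∈ s)
    (hd : HasFDerivAt f f' a) : f a + f' (b - a) ≤ f b := by
  have hline : HasDerivAt (AffineMap.lineMap a b : ℝ → E) (b - a) 0 :=
    AffineMap.hasDerivAt_lineMap
  have hφ : HasDerivAt (f ∘ AffineMap.lineMap (k := ℝ) a b) (f' (b - a)) 0 :=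
    (by simpa using hd : HasFDerivAt f f' (AffineMap.lineMap a b (0 : ℝ))).comp_hasDerivAt 0 hline
  have hslope := (hf.comp_affineMap (AffineMap.lineMap a b)).le_slope_of_hasDerivAt
    (by simpa using ha) (by simpa using hb) one_pos hφ
  simp only [slope, sub_zero, inv_one, Function.comp_apply, AffineMap.lineMap_apply_one,
    AffineMap.lineMap_apply_zero, vsub_eq_sub, smul_eq_mul, one_mul] at hslope
  linarith

theorem ConvexOn.add_inner_le_of_hasGradientAt [InnerProductSpace ℝ E] [CompleteSpace E]
    {s : Set E} {f : E → ℝ} {f' a b : E} (hf : ConvexOn ℝ s f) (ha : a ∈ s) (hb : b ∈ s)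
    (hd : HasGradientAt f f' a) : f a + ⟪f', b - a⟫ ≤ f b := by
  simpa using hf.add_le_of_hasFDerivAt ha hb hd.hasFDerivAt

end FirstOrder

section FrankWolfe

variable {E : Type*} [NormedAddCommGroup E] [InnerProductSpace ℝ E]

theorem Convex.mem_of_combo_recursion {X : Set E} (hX : Convex ℝ X) {x y : ℕ → E}
    {γ : ℕ → ℝ} (hγ : ∀ k ≥ 1, γ k ∈ Set.Icc 0 1) (hy0 : y 0 ∈ X) (hx : ∀ k ≥ 1, x k ∈ X)
    (hy : ∀ k ≥ 1, y k = (1 - γ k) • y (k - 1) + γ k • x k) (k : ℕ) : y k ∈ X := by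
  induction k with
  | zero => exact hy0
  | succ k ih =>
    obtain ⟨h0, h1⟩ := hγ (k + 1) k.succ_pos
    rw [hy (k + 1) k.succ_pos]
    exact hX ih (hx (k + 1) k.succ_pos) (sub_nonneg.2 h1) h0 (sub_add_cancel 1 _)

theorem inner_sub_le_of_inner_le_of_norm_sub_le {g d v z : E} {ε D : ℝ}
    (hmin : ⟪g, v⟫ ≤ ⟪g, z⟫) (hg : ‖g - d‖ ≤ ε) (hD : ‖v - z‖ ≤ D) :
    ⟪d, v - z⟫ ≤ ε * D :=
  calc ⟪d, v - z⟫ = ⟪g, v⟫ - ⟪g, z⟫ - ⟪g - d, v - z⟫ := by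
        simp only [inner_sub_left, inner_sub_right]; ring
    _ ≤ ‖g - d‖ * ‖v - z‖ := by
        linarith [neg_le_of_abs_le (abs_real_inner_le_norm (g - d) (v - z))]
    _ ≤ ε * D := mul_le_mul hg hD (norm_nonneg _) ((norm_nonneg _).trans hg)

theorem frankWolfe_step_le {φ : E → ℝ} {d p v z : E} {γ C δ D : ℝ} (hγ : 0 ≤ γ) (hC : 0 ≤ C)
    (hconv : φ p + ⟪d, z - p⟫ ≤ φ z)
    (hsmooth : φ ((1 - γ) • p + γ • v) ≤
      φ p + ⟪d, (1 - γ) • p + γ • v - p⟫ + C * ‖(1 - γ) • p + γ • v - p‖ ^ 2)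
    (hdir : ⟪d, v - z⟫ ≤ δ) (hD : ‖v - p‖ ≤ D) :
    φ ((1 - γ) • p + γ • v) ≤ (1 - γ) * φ p + γ * (φ z + δ) + γ ^ 2 * (C * D ^ 2) := by
  have hstep : (1 - γ) • p + γ • v - p = γ • (v - p) := by module
  have hinner : ⟪d, γ • (v - p)⟫ ≤ γ * (φ z - φ p + δ) := by
    rw [real_inner_smul_right, ← sub_add_sub_cancel v z p, inner_add_right]
    exact mul_le_mul_of_nonneg_left (by linarith) hγ
  have hnorm : C * ‖γ • (v - p)‖ ^ 2 ≤ γ ^ 2 * (C * D ^ 2) := by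
    rw [norm_smul, mul_pow, Real.norm_eq_abs, sq_abs, mul_left_comm]
    gcongr
  rw [hstep] at hsmooth
  linarith

end FrankWolfe

theorem mul_succ_div_two_mul_le_sum_of_frankWolfe_recursion {e b c : ℕ → ℝ}
    (hc : ∀ k ≥ 1, 0 ≤ c k)
    (h : ∀ k ≥ 1, e k ≤ (1 - 2 / (k + 1)) * e (k - 1) + 2 / (k + 1) * b k
      + (2 / (k + 1)) ^ 2 * c k) (k : ℕ) :
    (k : ℝ) * (k + 1) / 2 * e k ≤ ∑ i ∈ Icc 1 k, (i * b i + 2 * c i) := by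
  induction k with
  | zero => simp
  | succ k ih =>
    have hk := h (k + 1) k.succ_pos
    have hck := hc (k + 1) k.succ_pos
    rw [sum_Icc_succ_top (by omega)]
    push_cast at hk ⊢
    have hpos : (0 : ℝ) < k + 1 + 1 := by positivity
    have hexpand : (k + 1 : ℝ) * (k + 1 + 1) / 2 * ((1 - 2 / (k + 1 + 1)) * e k
          + 2 / (k + 1 + 1) * b (k + 1) + (2 / (k + 1 + 1)) ^ 2 * c (k + 1))
        = k * (k + 1) / 2 * e k + (k + 1) * b (k + 1)
          + (k + 1) / (k + 1 + 1) * (2 * c (k + 1)) := by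
      field_simp; ring
    have hfrac : (k + 1 : ℝ) / (k + 1 + 1) * (2 * c (k + 1)) ≤ 2 * c (k + 1) :=
      mul_le_of_le_one_left (by positivity) ((div_le_one hpos).2 (by linarith))
    calc (k + 1 : ℝ) * (k + 1 + 1) / 2 * e (k + 1)
        ≤ (k + 1 : ℝ) * (k + 1 + 1) / 2 * ((1 - 2 / (k + 1 + 1)) * e k
          + 2 / (k + 1 + 1) * b (k + 1) + (2 / (k + 1 + 1)) ^ 2 * c (k + 1)) :=
          mul_le_mul_of_nonneg_left hk (by positivity)
      _ ≤ _ := by rw [hexpand]; linarith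

theorem stmt11_general (n : ℕ)
    (X : Set (EuclideanSpace ℝ (Fin n)))
    (hXcv : Convex ℝ X)
    (DX M : ℝ) (hM : 0 < M)
    (hDX : IsGreatest {d : ℝ | ∃ a ∈ X, ∃ b ∈ X, d = ‖a - b‖} DX)
    (f : EuclideanSpace ℝ (Fin n) → ℝ)
    (fu : ℝ → EuclideanSpace ℝ (Fin n) → ℝ)
    (fu' : ℝ → EuclideanSpace ℝ (Fin n) → EuclideanSpace ℝ (Fin n))
    (hfuconv : ∀ u > (0 : ℝ), ConvexOn ℝ Set.univ (fu u))
    (hfugrad : ∀ u > (0 : ℝ), ∀ a, HasGradientAt (fu u) (fu' u a) a)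
    (ha : ∀ u > (0 : ℝ), ∀ a, f a ≤ fu u a ∧ fu u a ≤ f a + M * u)
    (hb : ∀ u > (0 : ℝ), ∀ a ∈ X, ∀ b ∈ X,
      fu u b ≤ fu u a + ⟪fu' u a, b - a⟫ + M * Real.sqrt n / (2 * u) * ‖b - a‖ ^ 2)
    (hc : ∀ u u' : ℝ, u ≥ u' → 0 < u' → ∀ a, fu u' a ≤ fu u a)
    (useq : ℕ → ℝ) (hupos : ∀ k ≥ 1, 0 < useq k) (humono : ∀ k ≥ 1, useq (k + 1) ≤ useq k)
    (εseq : ℕ → ℝ)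
    (g : ℕ → EuclideanSpace ℝ (Fin n))
    (x y : ℕ → EuclideanSpace ℝ (Fin n)) (γ : ℕ → ℝ) (hγ : ∀ k : ℕ, γ k = 2 / (k + 1))
    (hx0 : x 0 ∈ X) (hy0 : y 0 = x 0)
    (hg : ∀ k ≥ 1, ‖g k - fu' (useq k) (y (k - 1))‖ ≤ εseq k)
    (hxk : ∀ k ≥ 1, x k ∈ X ∧ ∀ z ∈ X, ⟪g k, x k⟫ ≤ ⟪g k, z⟫)
    (hyk : ∀ k ≥ 1, y k = (1 - γ k) • y (k - 1) + γ k • x k) :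
    ∀ k ≥ 1, ∀ u ∈ X,
      f (y k) - f u ≤ 2 / (k * (k + 1)) *
        ∑ i ∈ Finset.Icc 1 k,
          ((i : ℝ) * εseq i * DX + (i : ℝ) * M * useq i +
            M * Real.sqrt n / useq i * DX ^ 2) := by
  intro k hk z hz
  have hdiam : ∀ a ∈ X, ∀ b ∈ X, ‖a - b‖ ≤ DX := fun a ha b hb => hDX.2 ⟨a, ha, b, hb, rfl⟩
  have hγmem : ∀ i ≥ 1, γ i ∈ Set.Icc 0 1 := fun i hi => by
    rw [hγ, Set.mem_Icc, div_le_one (by positivity)]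
    exact ⟨by positivity, by norm_cast; omega⟩
  have hyX := hXcv.mem_of_combo_recursion hγmem (hy0 ▸ hx0) (fun i hi => (hxk i hi).1) hyk
  set c : ℕ → ℝ := fun i => M * Real.sqrt n / (2 * useq i) * DX ^ 2
  have hc0 : ∀ i ≥ 1, 0 ≤ c i := fun i hi => by have := hupos i hi; positivity
  set e : ℕ → ℝ := fun i => fu (useq i) (y i) - f z
  have hrec : ∀ i ≥ 1, e i ≤ (1 - 2 / (i + 1)) * e (i - 1)
      + 2 / (i + 1) * (εseq i * DX + M * useq i) + (2 / (i + 1)) ^ 2 * c i := by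
    intro i hi
    have hu := hupos i hi
    obtain ⟨hγ0, hγ1⟩ := hγmem i hi
    have hstep := frankWolfe_step_le (φ := fu (useq i)) (C := M * Real.sqrt n / (2 * useq i))
      hγ0 (by positivity)
      ((hfuconv _ hu).add_inner_le_of_hasGradientAt trivial trivial (hfugrad _ hu (y (i - 1))))
      (hyk i hi ▸ hb _ hu (y (i - 1)) (hyX _) (y i) (hyX i))
      (inner_sub_le_of_inner_le_of_norm_sub_le ((hxk i hi).2 z hz) (hg i hi)
        (hdiam _ (hxk i hi).1 _ hz))
      (hdiam _ (hxk i hi).1 _ (hyX _))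
    rw [← hyk i hi] at hstep
    -- `useq 0` is unconstrained, but for `i = 1` the coefficient `1 - γ 1` vanishes.
    have hprev : (1 - γ i) * fu (useq i) (y (i - 1))
        ≤ (1 - γ i) * fu (useq (i - 1)) (y (i - 1)) := by
      obtain rfl | hi2 := hi.eq_or_lt
      · norm_num [hγ]
      · refine mul_le_mul_of_nonneg_left (hc _ _ ?_ hu _) (by linarith)
        simpa [Nat.sub_add_cancel hi] using humono (i - 1) (by omega)
    have hupper := mul_le_mul_of_nonneg_left (ha _ hu z).2 hγ0
    simp only [e, ← hγ]
    linarith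
  have hbound := mul_succ_div_two_mul_le_sum_of_frankWolfe_recursion hc0 hrec k
  have hk0 : (0 : ℝ) < k * (k + 1) := by positivity
  calc f (y k) - f z ≤ e k := by linarith [(ha _ (hupos k hk) (y k)).1]
    _ ≤ 2 / (k * (k + 1)) *
          ∑ i ∈ Finset.Icc 1 k, (i * (εseq i * DX + M * useq i) + 2 * c i) := by
      rw [div_mul_eq_mul_div, le_div_iff₀ hk0]
      linarith
    _ = _ := by
      congr 1
      refine Finset.sum_congr rfl fun i _ => ?_
      simp only [c]
      ring

/-- Inexact randomized-smoothing conditional gradient for a convex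
`M`-Lipschitz `f` on `ℝⁿ`: with smoothings `f_u` satisfying (a) `f ≤ f_u ≤ f + M u`,
(b) `(M√n/u)`-smoothness on `X`, (c) monotonicity in `u`, gradient errors
`‖g_k − ∇f_{u_k}(y_{k−1})‖ ≤ ε_k`, `x_k ∈ argmin_{x∈X}⟨g_k,x⟩`, and
`y_k = (1−γ_k)y_{k−1} + γ_k x_k`, `γ_k = 2/(k+1)`, one has for every `k ≥ 1` and `x ∈ X`:
`f(y_k) − f(x) ≤ (2/(k(k+1))) ∑_{i=1}^k [i ε_i D_X + i M u_i + (M√n/u_i) D_X²]`. -/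
theorem stmt11 (n : ℕ) (hn : 1 ≤ n)
    (X : Set (EuclideanSpace ℝ (Fin n)))
    (hXcp : IsCompact X) (hXcv : Convex ℝ X) (hXne : X.Nonempty)
    (DX M : ℝ) (hM : 0 < M)
    (hDX : IsGreatest {d : ℝ | ∃ a ∈ X, ∃ b ∈ X, d = ‖a - b‖} DX)
    (f : EuclideanSpace ℝ (Fin n) → ℝ)
    (hfconv : ConvexOn ℝ Set.univ f)
    (hLip : ∀ a ∈ X, ∀ b ∈ X, |f a - f b| ≤ M * ‖a - b‖)
    (fu : ℝ → EuclideanSpace ℝ (Fin n) → ℝ)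
    (fu' : ℝ → EuclideanSpace ℝ (Fin n) → EuclideanSpace ℝ (Fin n))
    (hfuconv : ∀ u > (0 : ℝ), ConvexOn ℝ Set.univ (fu u))
    (hfugrad : ∀ u > (0 : ℝ), ∀ a, HasGradientAt (fu u) (fu' u a) a)
    (ha : ∀ u > (0 : ℝ), ∀ a, f a ≤ fu u a ∧ fu u a ≤ f a + M * u)
    (hb : ∀ u > (0 : ℝ), ∀ a ∈ X, ∀ b ∈ X,
      fu u b ≤ fu u a + ⟪fu' u a, b - a⟫ + M * Real.sqrt n / (2 * u) * ‖b - a‖ ^ 2)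
    (hc : ∀ u u' : ℝ, u ≥ u' → 0 < u' → ∀ a, fu u' a ≤ fu u a)
    (useq : ℕ → ℝ) (hupos : ∀ k ≥ 1, 0 < useq k) (humono : ∀ k ≥ 1, useq (k + 1) ≤ useq k)
    (εseq : ℕ → ℝ) (hεseq : ∀ k ≥ 1, 0 ≤ εseq k)
    (g : ℕ → EuclideanSpace ℝ (Fin n))
    (x y : ℕ → EuclideanSpace ℝ (Fin n)) (γ : ℕ → ℝ) (hγ : ∀ k : ℕ, γ k = 2 / (k + 1))
    (hx0 : x 0 ∈ X) (hy0 : y 0 = x 0)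
    (hg : ∀ k ≥ 1, ‖g k - fu' (useq k) (y (k - 1))‖ ≤ εseq k)
    (hxk : ∀ k ≥ 1, x k ∈ X ∧ ∀ z ∈ X, ⟪g k, x k⟫ ≤ ⟪g k, z⟫)
    (hyk : ∀ k ≥ 1, y k = (1 - γ k) • y (k - 1) + γ k • x k) :
    ∀ k ≥ 1, ∀ u ∈ X,
      f (y k) - f u ≤ 2 / (k * (k + 1)) *
        ∑ i ∈ Finset.Icc 1 k,
          ((i : ℝ) * εseq i * DX + (i : ℝ) * M * useq i +
            M * Real.sqrt n / useq i * DX ^ 2) :=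
  stmt11_general n X hXcv DX M hM hDX f fu fu' hfuconv hfugrad ha hb hc useq hupos humono εseq g x y
    γ hγ hx0 hy0 hg hxk hyk
end

section
/- Let f be convex, L-smooth and μ-strongly convex on X, let x* be the minimizer of f over X, and suppose p ∈ X satisfies ‖p − x*‖ ≤ R for some R > 0. Run the conditional gradient method on the restricted set X' := {x ∈ X : ‖x − p‖ ≤ R}: y₀ := p, and for k ≥ 1, x_k ∈ argmin_{x∈X'} f'(y_{k−1})(x), y_k := (1−γ_k) y_{k−1} + γ_k x_k with γ_k := 2/(k+1). Then for every K ≥ 1, f(y_K) − f(x*) ≤ 8 L R²/(K+1); consequently, if K + 1 ≥ 32 L/μ, then ‖y_K − x*‖ ≤ R/√2. -/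
/-!
On the restricted set `X' = X ∩ closedBall p R`, which contains `x*` and has diameter at most
`2R`, the classical Frank–Wolfe analysis applies: smoothness and the linear minimization step
give `e_{k+1} ≤ (1 - γ_{k+1}) e_k + 2 L R² γ_{k+1}²` for the gap `e_k = f(y_k) - f(x*)`, and
with `γ_k = 2/(k+1)` this solves to `e_K ≤ 8 L R²/(K+2)`. Since `x*` minimizes `f` over the
convex set `X`, strong convexity yields quadratic growth `μ/2 ‖y - x*‖² ≤ f(y) - f(x*)`, and
`K + 1 ≥ 32 L/μ` turns the gap bound into `‖y_K - x*‖² ≤ R²/2`.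
-/

open Set

section FrankWolfe

variable {E : Type*} [NormedAddCommGroup E] [NormedSpace ℝ E]
  {f : E → ℝ} {f' : E → E →L[ℝ] ℝ}

theorem frankWolfe_descent {L D γ : ℝ} {y x y' z : E} (hL : 0 ≤ L) (hγ : 0 ≤ γ)
    (hy' : y' - y = γ • (x - y)) (hD : ‖x - y‖ ≤ D)
    (hsm : f y' ≤ f y + f' y (y' - y) + L / 2 * ‖y' - y‖ ^ 2)
    (hmin : f' y x ≤ f' y z) (hlow : f y + f' y (z - y) ≤ f z) :
    f y' - f z ≤ (1 - γ) * (f y - f z) + L / 2 * D ^ 2 * γ ^ 2 := by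
  rw [hy', map_smul, smul_eq_mul, norm_smul, Real.norm_of_nonneg hγ, map_sub] at hsm
  rw [map_sub] at hlow
  have hD2 : ‖x - y‖ ^ 2 ≤ D ^ 2 := pow_le_pow_left₀ (norm_nonneg _) hD 2
  nlinarith [mul_le_mul_of_nonneg_left hmin hγ,
    mul_le_mul_of_nonneg_left hD2 (by positivity : 0 ≤ L / 2 * γ ^ 2)]

theorem le_of_frankWolfe_recursion {e γ : ℕ → ℝ} {C : ℝ} (hC : 0 ≤ C)
    (hγ : ∀ k : ℕ, γ k = 2 / (k + 1))
    (h : ∀ k : ℕ, e (k + 1) ≤ (1 - γ (k + 1)) * e k + C * γ (k + 1) ^ 2) :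
    ∀ K ≥ 1, e K ≤ 4 * C / (K + 2) := by
  intro K hK
  induction K, hK using Nat.le_induction with
  | base =>
    have h0 := h 0
    norm_num [hγ] at h0 ⊢
    linarith
  | succ n _ ih =>
    have hn := h n
    rw [hγ] at hn
    push_cast at hn ⊢
    have hcoef : 0 ≤ 1 - 2 / ((n : ℝ) + 1 + 1) := by
      rw [sub_nonneg, div_le_one (by positivity)]
      linarith [(n.cast_nonneg : (0 : ℝ) ≤ n)]
    calc e (n + 1)
        ≤ (1 - 2 / ((n : ℝ) + 1 + 1)) * (4 * C / (n + 2))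
            + C * (2 / ((n : ℝ) + 1 + 1)) ^ 2 := by
          nlinarith [mul_le_mul_of_nonneg_left ih hcoef]
      _ = 4 * C * (n + 1) / (n + 2) ^ 2 := by field_simp; ring
      _ ≤ 4 * C / (n + 1 + 2) := by
          rw [div_le_div_iff₀ (by positivity) (by positivity)]
          nlinarith [mul_nonneg hC (n.cast_nonneg : (0 : ℝ) ≤ n)]

variable {S : Set E} {x y : ℕ → E} {γ : ℕ → ℝ}

theorem two_div_succ_mem_Icc {k : ℕ} (hk : 1 ≤ k) : 2 / ((k : ℝ) + 1) ∈ Icc 0 1 :=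
  ⟨by positivity, by rw [div_le_one (by positivity)]; exact_mod_cast Nat.succ_le_succ hk⟩

theorem frankWolfe_mem (hS : Convex ℝ S) (hγ : ∀ k ≥ 1, γ k ∈ Icc 0 1) (hy0 : y 0 ∈ S)
    (hx : ∀ k ≥ 1, x k ∈ S) (hyk : ∀ k ≥ 1, y k = (1 - γ k) • y (k - 1) + γ k • x k) :
    ∀ k, y k ∈ S
  | 0 => hy0
  | k + 1 => by
    obtain ⟨hγ0, hγ1⟩ := hγ (k + 1) k.succ_pos
    rw [hyk (k + 1) k.succ_pos]
    exact hS (frankWolfe_mem hS hγ hy0 hx hyk k) (hx (k + 1) k.succ_pos) (by linarith) hγ0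
      (by ring)

theorem frankWolfe_rate {D L : ℝ} (hD : ∀ a ∈ S, ∀ b ∈ S, ‖a - b‖ ≤ D)
    (hL : 0 ≤ L) (hsm : ∀ a ∈ S, ∀ b ∈ S, f b ≤ f a + f' a (b - a) + L / 2 * ‖b - a‖ ^ 2)
    {z : E} (hz : z ∈ S) (hlow : ∀ a ∈ S, f a + f' a (z - a) ≤ f z)
    (hγ : ∀ k : ℕ, γ k = 2 / (k + 1)) (hyS : ∀ k, y k ∈ S)
    (hxk : ∀ k ≥ 1, x k ∈ S ∧ ∀ w ∈ S, f' (y (k - 1)) (x k) ≤ f' (y (k - 1)) w)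
    (hyk : ∀ k ≥ 1, y k = (1 - γ k) • y (k - 1) + γ k • x k) :
    ∀ K ≥ 1, f (y K) - f z ≤ 2 * L * D ^ 2 / (K + 2) := by
  have hγ0 : ∀ k, 0 ≤ γ k := fun k ↦ by rw [hγ]; positivity
  have hrec : ∀ k : ℕ, f (y (k + 1)) - f z ≤
      (1 - γ (k + 1)) * (f (y k) - f z) + L / 2 * D ^ 2 * γ (k + 1) ^ 2 := fun k ↦ by
    obtain ⟨hxS, hxmin⟩ := hxk (k + 1) k.succ_pos
    refine frankWolfe_descent hL (hγ0 _) ?_ (hD _ hxS _ (hyS k))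
      (hsm _ (hyS k) _ (hyS (k + 1))) (hxmin z hz) (hlow _ (hyS k))
    rw [hyk (k + 1) k.succ_pos, Nat.add_sub_cancel, smul_sub, sub_smul, one_smul]
    abel
  intro K hK
  have := le_of_frankWolfe_recursion (e := fun k ↦ f (y k) - f z) (by positivity) hγ hrec
    K hK
  rwa [show 4 * (L / 2 * D ^ 2) = 2 * L * D ^ 2 by ring] at this

end FrankWolfe

theorem le_div_sqrt_two_of_gap_le {d g L μ R κ : ℝ} (hμ : 0 < μ) (hκ : 0 < κ) (hd : 0 ≤ d)
    (hR : 0 ≤ R) (hκμ : 32 * L / μ ≤ κ) (hgrowth : μ / 2 * d ^ 2 ≤ g)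
    (hg : g ≤ 8 * L * R ^ 2 / κ) : d ≤ R / Real.sqrt 2 := by
  rw [div_le_iff₀ hμ] at hκμ
  rw [le_div_iff₀ hκ] at hg
  have hsq : κ * μ * (2 * d ^ 2) ≤ κ * μ * R ^ 2 := by
    nlinarith [mul_le_mul_of_nonneg_left hκμ (sq_nonneg R),
      mul_le_mul_of_nonneg_left hgrowth hκ.le]
  rw [le_div_iff₀ (by positivity), ← sq_le_sq₀ (by positivity) hR, mul_pow,
    Real.sq_sqrt zero_le_two]
  linarith [le_of_mul_le_mul_left hsq (mul_pos hκ hμ)]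

theorem sq_norm_sub_le_of_isMinOn {E : Type*} [NormedAddCommGroup E] [NormedSpace ℝ E]
    {S : Set E} (hS : Convex ℝ S) {f : E → ℝ} {f' : E →L[ℝ] ℝ} {μ : ℝ} {a b : E}
    (hmin : IsMinOn f S a) (hder : HasFDerivAt f f' a) (ha : a ∈ S) (hb : b ∈ S)
    (hsc : f a + f' (b - a) + μ / 2 * ‖b - a‖ ^ 2 ≤ f b) :
    μ / 2 * ‖b - a‖ ^ 2 ≤ f b - f a := by
  have := hmin.localize.hasFDerivWithinAt_nonneg hder.hasFDerivWithinAt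
    (sub_mem_posTangentConeAt_of_segment_subset (hS.segment_subset ha hb))
  linarith

theorem stmt12_general {E : Type*} [NormedAddCommGroup E] [NormedSpace ℝ E]
    (X : Set E) (hXcv : Convex ℝ X)
    (f : E → ℝ) (f' : E → E →L[ℝ] ℝ) (L μ : ℝ) (hμ : 0 < μ) (hμL : μ ≤ L)
    (hder : ∀ a ∈ X, HasFDerivAt f (f' a) a)
    (hsm : ∀ a ∈ X, ∀ b ∈ X, f b ≤ f a + f' a (b - a) + L / 2 * ‖b - a‖ ^ 2)
    (hsc : ∀ a ∈ X, ∀ b ∈ X, f a + f' a (b - a) + μ / 2 * ‖b - a‖ ^ 2 ≤ f b)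
    (xstar : E) (hxstarX : xstar ∈ X) (hxstarmin : ∀ z ∈ X, f xstar ≤ f z)
    (p : E) (hp : p ∈ X) (R : ℝ) (hpR : ‖p - xstar‖ ≤ R)
    (X' : Set E) (hX' : X' = {z ∈ X | ‖z - p‖ ≤ R})
    (x y : ℕ → E) (γ : ℕ → ℝ) (hγ : ∀ k : ℕ, γ k = 2 / (k + 1))
    (hy0 : y 0 = p)
    (hxk : ∀ k ≥ 1, x k ∈ X' ∧ ∀ z ∈ X', f' (y (k - 1)) (x k) ≤ f' (y (k - 1)) z)
    (hyk : ∀ k ≥ 1, y k = (1 - γ k) • y (k - 1) + γ k • x k) :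
    ∀ K ≥ 1,
      f (y K) - f xstar ≤ 8 * L * R ^ 2 / (K + 1) ∧
      ((K : ℝ) + 1 ≥ 32 * L / μ → ‖y K - xstar‖ ≤ R / Real.sqrt 2) := by
  have hR : 0 ≤ R := (norm_nonneg _).trans hpR
  replace hX' : X' = X ∩ Metric.closedBall p R := by
    rw [hX']; ext; simp [dist_eq_norm]
  have hX'X : X' ⊆ X := hX' ▸ inter_subset_left
  have hdiam : ∀ a ∈ X', ∀ b ∈ X', ‖a - b‖ ≤ 2 * R := fun a ha b hb ↦ by
    rw [hX'] at ha hb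
    rw [← dist_eq_norm]
    exact (Metric.dist_le_diam_of_mem Metric.isBounded_closedBall ha.2 hb.2).trans
      (Metric.diam_closedBall hR)
  have hyX' := frankWolfe_mem (hX' ▸ hXcv.inter (convex_closedBall p R))
    (fun k hk ↦ hγ k ▸ two_div_succ_mem_Icc hk)
    (hy0 ▸ hX' ▸ ⟨hp, Metric.mem_closedBall_self hR⟩) (fun k hk ↦ (hxk k hk).1) hyk
  have hrate := frankWolfe_rate hdiam (hμ.le.trans hμL)
    (fun a ha b hb ↦ hsm a (hX'X ha) b (hX'X hb))
    (show xstar ∈ X' from hX' ▸ ⟨hxstarX, by rwa [mem_closedBall_iff_norm']⟩)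
    (fun a ha ↦ (hsc a (hX'X ha) xstar hxstarX).trans' (le_add_of_nonneg_right (by positivity)))
    hγ hyX' hxk hyk
  intro K hK
  have hgap : f (y K) - f xstar ≤ 8 * L * R ^ 2 / (K + 1) :=
    calc f (y K) - f xstar ≤ 8 * L * R ^ 2 / (K + 2) := (hrate K hK).trans_eq (by ring)
      _ ≤ 8 * L * R ^ 2 / (K + 1) := by gcongr <;> nlinarith
  have hyK : y K ∈ X := hX'X (hyX' K)
  refine ⟨hgap, fun hKμ ↦ le_div_sqrt_two_of_gap_le hμ (by positivity) (norm_nonneg _) hR hKμ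
    ?_ hgap⟩
  exact sq_norm_sub_le_of_isMinOn hXcv hxstarmin (hder xstar hxstarX) hxstarX hyK
    (hsc xstar hxstarX (y K) hyK)

/-- Conditional gradient on the restricted set `X' = {x ∈ X : ‖x − p‖ ≤ R}`,
for an `L`-smooth, `μ`-strongly convex `f` with minimizer `x*` over `X` and `‖p − x*‖ ≤ R`:
for every `K ≥ 1`, `f(y_K) − f(x*) ≤ 8 L R²/(K+1)`, and if `K + 1 ≥ 32 L/μ` then
`‖y_K − x*‖ ≤ R/√2`. -/
theorem stmt12 {E : Type*} [NormedAddCommGroup E] [NormedSpace ℝ E] [FiniteDimensional ℝ E]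
    (X : Set E) (hXcp : IsCompact X) (hXcv : Convex ℝ X) (hXne : X.Nonempty)
    (f : E → ℝ) (f' : E → E →L[ℝ] ℝ) (L μ : ℝ) (hμ : 0 < μ) (hμL : μ ≤ L)
    (hconv : ConvexOn ℝ X f)
    (hder : ∀ a ∈ X, HasFDerivAt f (f' a) a)
    (hsm : ∀ a ∈ X, ∀ b ∈ X, f b ≤ f a + f' a (b - a) + L / 2 * ‖b - a‖ ^ 2)
    (hsc : ∀ a ∈ X, ∀ b ∈ X, f a + f' a (b - a) + μ / 2 * ‖b - a‖ ^ 2 ≤ f b)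
    (xstar : E) (hxstarX : xstar ∈ X) (hxstarmin : ∀ z ∈ X, f xstar ≤ f z)
    (p : E) (hp : p ∈ X) (R : ℝ) (hR : 0 < R) (hpR : ‖p - xstar‖ ≤ R)
    (X' : Set E) (hX' : X' = {z ∈ X | ‖z - p‖ ≤ R})
    (x y : ℕ → E) (γ : ℕ → ℝ) (hγ : ∀ k : ℕ, γ k = 2 / (k + 1))
    (hy0 : y 0 = p)
    (hxk : ∀ k ≥ 1, x k ∈ X' ∧ ∀ z ∈ X', f' (y (k - 1)) (x k) ≤ f' (y (k - 1)) z)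
    (hyk : ∀ k ≥ 1, y k = (1 - γ k) • y (k - 1) + γ k • x k) :
    ∀ K ≥ 1,
      f (y K) - f xstar ≤ 8 * L * R ^ 2 / (K + 1) ∧
      ((K : ℝ) + 1 ≥ 32 * L / μ → ‖y K - xstar‖ ≤ R / Real.sqrt 2) :=
  stmt12_general X hXcv f f' L μ hμ hμL hder hsm hsc xstar hxstarX hxstarmin p hp R hpR X' hX' x y γ
    hγ hy0 hxk hyk
end

section
/- Consider the shrinking conditional gradient method: let x* be the minimizer of f over X, let R₀ := D_X and R_t := R₀/2^{t/2} for t ≥ 1, fix an integer K with K + 1 ≥ 32 L/μ, choose p₀ ∈ X, and for each t ≥ 1 let p_t be the output y_K of K conditional gradient iterations on X_{t−1} := {x ∈ X : ‖x − p_{t−1}‖ ≤ R_{t−1}} started at y₀ = p_{t−1} (i.e., for k = 1,…,K: x_k ∈ argmin_{x∈X_{t−1}} f'(y_{k−1})(x), y_k := (1−γ_k)y_{k−1} + γ_k x_k with γ_k := 2/(k+1)). Then for every t ≥ 1: ‖p_t − x*‖ ≤ R_t and f(p_t) − f(x*) ≤ (μ/2) R_t² = μ D_X²/2^{t+1}.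 Consequently, the number of linear optimization oracle calls needed to find an ε-solution is at most K·⌈max(log₂(μ D_X²/(2ε)), 1)⌉. -/
open Real

set_option maxHeartbeats 1000000

private lemma stmt13_fo {E : Type*} [NormedAddCommGroup E] [NormedSpace ℝ E]
    (X : Set E) (hXcv : Convex ℝ X)
    (f : E → ℝ) (f' : E → E →L[ℝ] ℝ) (L : ℝ) (hL : 0 < L)
    (hsm : ∀ a ∈ X, ∀ b ∈ X, f b ≤ f a + f' a (b - a) + L / 2 * ‖b - a‖ ^ 2)
    (xstar : E) (hxstarX : xstar ∈ X) (hxstarmin : ∀ z ∈ X, f xstar ≤ f z)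
    (z : E) (hz : z ∈ X) : 0 ≤ f' xstar (z - xstar) := by
  by_contra hlt
  push_neg at hlt
  set g := f' xstar (z - xstar) with hg
  set c := ‖z - xstar‖ ^ 2 with hc
  have hc0 : 0 < c := by
    rcases eq_or_ne (z - xstar) 0 with h | h
    · exfalso
      rw [hg, h] at hlt
      simp at hlt
    · have : 0 < ‖z - xstar‖ := norm_pos_iff.2 h
      positivity
  set s : ℝ := min 1 (-g / (L * c)) with hs
  have hs0 : 0 < s := by
    apply lt_min one_pos
    apply div_pos (by linarith) (by positivity)
  have hs1 : s ≤ 1 := min_le_left _ _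
  have hsLc : s * (L * c) ≤ -g := by
    have h1 : s ≤ -g / (L * c) := min_le_right _ _
    rw [le_div_iff₀ (by positivity : (0:ℝ) < L * c)] at h1
    exact h1
  have hbX : xstar + s • (z - xstar) ∈ X := by
    have h2 := hXcv hxstarX hz (by linarith : (0:ℝ) ≤ 1 - s) hs0.le (by ring)
    convert h2 using 1
    module
  have hsm' := hsm xstar hxstarX _ hbX
  have e1 : (xstar + s • (z - xstar)) - xstar = s • (z - xstar) := by abel
  rw [e1] at hsm'
  have e2 : f' xstar (s • (z - xstar)) = s * g := by rw [map_smul]; rfl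
  have e3 : ‖s • (z - xstar)‖ ^ 2 = s ^ 2 * c := by
    rw [norm_smul, mul_pow, Real.norm_eq_abs, sq_abs, hc]
  rw [e2, e3] at hsm'
  have hmin := hxstarmin _ hbX
  nlinarith [mul_pos hs0 (neg_pos.2 hlt), mul_le_mul_of_nonneg_left hsLc hs0.le]

private lemma stmt13_cg {E : Type*} [NormedAddCommGroup E] [NormedSpace ℝ E]
    (X : Set E) (hXcv : Convex ℝ X)
    (f : E → ℝ) (f' : E → E →L[ℝ] ℝ) (L μ : ℝ) (hμ : 0 < μ) (hμL : μ ≤ L)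
    (hsm : ∀ a ∈ X, ∀ b ∈ X, f b ≤ f a + f' a (b - a) + L / 2 * ‖b - a‖ ^ 2)
    (hsc : ∀ a ∈ X, ∀ b ∈ X, f a + f' a (b - a) + μ / 2 * ‖b - a‖ ^ 2 ≤ f b)
    (xstar : E) (hxstarX : xstar ∈ X) (hxstarmin : ∀ z ∈ X, f xstar ≤ f z)
    (q : E) (hq : q ∈ X) (r : ℝ) (hr : 0 ≤ r) (hxs : ‖xstar - q‖ ≤ r)
    (K : ℕ) (hK1 : 1 ≤ K)
    (x y : ℕ → E) (hy0 : y 0 = q)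
    (hstep : ∀ k, 1 ≤ k → k ≤ K →
      (x k ∈ {z ∈ X | ‖z - q‖ ≤ r} ∧
        ∀ z ∈ {z ∈ X | ‖z - q‖ ≤ r}, f' (y (k - 1)) (x k) ≤ f' (y (k - 1)) z) ∧
      y k = (1 - 2 / ((k : ℝ) + 1)) • y (k - 1) + (2 / ((k : ℝ) + 1)) • x k) :
    y K ∈ X ∧ ‖y K - q‖ ≤ r ∧
      f (y K) - f xstar ≤ 8 * L * r ^ 2 / ((K : ℝ) + 2) := by
  have hL : 0 < L := lt_of_lt_of_le hμ hμL
  have main : ∀ k, k ≤ K → y k ∈ X ∧ ‖y k - q‖ ≤ r ∧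
      (1 ≤ k → f (y k) - f xstar ≤ 8 * L * r ^ 2 / ((k : ℝ) + 2)) := by
    intro k
    induction k with
    | zero =>
      intro _
      refine ⟨hy0 ▸ hq, ?_, fun h => by omega⟩
      simp [hy0, hr]
    | succ k ih =>
      intro hkK
      obtain ⟨ykX, ykball, ykval⟩ := ih (by omega)
      obtain ⟨⟨hxm, hopt⟩, hym⟩ := hstep (k+1) (by omega) hkK
      simp only [Nat.add_sub_cancel] at hopt hym
      obtain ⟨hxmX, hxmball⟩ := hxm
      set γ : ℝ := 2 / ((k:ℝ) + 1 + 1) with hγ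
      have hγ' : (2 : ℝ) / (((k+1:ℕ) : ℝ) + 1) = γ := by push_cast [hγ]; ring_nf
      rw [hγ'] at hym
      have hγ0 : 0 < γ := by positivity
      have hγ1 : γ ≤ 1 := by
        rw [hγ, div_le_one (by positivity)]
        have : (0:ℝ) ≤ (k:ℝ) := Nat.cast_nonneg k
        linarith
      have hymX : y (k+1) ∈ X := by
        rw [hym]
        exact hXcv ykX hxmX (by linarith) hγ0.le (by ring)
      have hball : ‖y (k+1) - q‖ ≤ r := by
        have e : y (k+1) - q = (1 - γ) • (y k - q) + γ • (x (k+1) - q) := by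
          rw [hym]; module
        calc ‖y (k+1) - q‖ ≤ ‖(1 - γ) • (y k - q)‖ + ‖γ • (x (k+1) - q)‖ := by
              rw [e]; exact norm_add_le _ _
          _ = (1 - γ) * ‖y k - q‖ + γ * ‖x (k+1) - q‖ := by
              rw [norm_smul, norm_smul, Real.norm_eq_abs, Real.norm_eq_abs,
                abs_of_nonneg (by linarith), abs_of_nonneg hγ0.le]
          _ ≤ (1 - γ) * r + γ * r := by gcongr <;> linarith
          _ = r := by ring
      refine ⟨hymX, hball, fun _ => ?_⟩
      have hdiff : y (k+1) - y k = γ • (x (k+1) - y k) := by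
        rw [hym]; module
      have hd : ‖x (k+1) - y k‖ ≤ 2 * r := by
        calc ‖x (k+1) - y k‖ ≤ ‖x (k+1) - q‖ + ‖q - y k‖ := by
              have e4 : x (k+1) - y k = (x (k+1) - q) + (q - y k) := by abel
              rw [e4]; exact norm_add_le _ _
          _ ≤ r + r := by
              refine add_le_add hxmball ?_
              rw [norm_sub_rev]; exact ykball
          _ = 2 * r := by ring
      have hsm' := hsm (y k) ykX (y (k+1)) hymX
      rw [hdiff, map_smul, smul_eq_mul] at hsm'
      have e3 : ‖γ • (x (k+1) - y k)‖ ^ 2 = γ ^ 2 * ‖x (k+1) - y k‖ ^ 2 := by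
        rw [norm_smul, mul_pow, Real.norm_eq_abs, sq_abs]
      rw [e3] at hsm'
      have hoptx : f' (y k) (x (k+1)) ≤ f' (y k) xstar := hopt xstar ⟨hxstarX, hxs⟩
      have hlin : f' (y k) (x (k+1) - y k) ≤ f' (y k) (xstar - y k) := by
        rw [map_sub, map_sub]; linarith
      have hgrad : f (y k) + f' (y k) (xstar - y k) ≤ f xstar := by
        have h5 := hsc (y k) ykX xstar hxstarX
        nlinarith [sq_nonneg ‖xstar - y k‖]
      have hnn : 0 ≤ f (y k) - f xstar := by linarith [hxstarmin (y k) ykX]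
      have hN : ‖x (k+1) - y k‖ ^ 2 ≤ 4 * r ^ 2 := by
        nlinarith [norm_nonneg (x (k+1) - y k)]
      have h1 : γ * f' (y k) (x (k+1) - y k) ≤ γ * (f xstar - f (y k)) := by
        apply mul_le_mul_of_nonneg_left _ hγ0.le
        linarith
      have h2 : L / 2 * (γ ^ 2 * ‖x (k+1) - y k‖ ^ 2) ≤ L / 2 * (γ ^ 2 * (4 * r ^ 2)) := by
        apply mul_le_mul_of_nonneg_left _ (by positivity)
        exact mul_le_mul_of_nonneg_left hN (by positivity)
      have hkey : f (y (k+1)) - f xstar ≤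
          (1 - γ) * (f (y k) - f xstar) + L / 2 * γ ^ 2 * (4 * r ^ 2) := by
        nlinarith [hsm', h1, h2]
      rcases Nat.eq_zero_or_pos k with hk0 | hk1
      · -- k = 0 : γ = 1
        subst hk0
        have hγval : γ = 1 := by norm_num [hγ]
        rw [hγval] at hkey
        have hLr : (0:ℝ) ≤ L * r ^ 2 := by positivity
        push_cast
        norm_num at hkey ⊢
        linarith
      · -- k ≥ 1
        set c : ℝ := (k:ℝ) + 2 with hcdef
        have hc3 : (3:ℝ) ≤ c := by
          have : (1:ℝ) ≤ (k:ℝ) := by exact_mod_cast hk1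
          simp only [hcdef]; linarith
        have hc0 : (0:ℝ) < c := by linarith
        have hγc : γ = 2 / c := by rw [hγ, hcdef]; ring_nf
        have hIH : f (y k) - f xstar ≤ 8 * L * r ^ 2 / c := by
          have := ykval hk1
          rw [hcdef]; convert this using 3 <;> ring
        have hB : (0:ℝ) ≤ 8 * L * r ^ 2 := by positivity
        have h1mγ : (0:ℝ) ≤ 1 - γ := by linarith
        have frac : (1 - 2/c) * (1/c) + 1/c^2 ≤ 1/(c+1) := by
          have e5 : (1 - 2/c) * (1/c) + 1/c^2 = (c-1)/c^2 := by
            field_simp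
            ring
          rw [e5, div_le_div_iff₀ (by positivity) (by positivity)]
          nlinarith
        have hgoal : f (y (k+1)) - f xstar ≤ 8 * L * r ^ 2 / (c + 1) := by
          calc f (y (k+1)) - f xstar
              ≤ (1 - γ) * (f (y k) - f xstar) + L / 2 * γ ^ 2 * (4 * r ^ 2) := hkey
            _ ≤ (1 - γ) * (8 * L * r ^ 2 / c) + L / 2 * γ ^ 2 * (4 * r ^ 2) := by
                have := mul_le_mul_of_nonneg_left hIH h1mγ
                linarith
            _ = (8 * L * r ^ 2) * ((1 - 2/c) * (1/c) + 1/c^2) := by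
                rw [hγc]; field_simp; ring
            _ ≤ (8 * L * r ^ 2) * (1/(c+1)) := mul_le_mul_of_nonneg_left frac hB
            _ = 8 * L * r ^ 2 / (c + 1) := by ring
        have e6 : ((k+1:ℕ) : ℝ) + 2 = c + 1 := by rw [hcdef]; push_cast; ring
        rw [e6]
        exact hgoal
  obtain ⟨h1, h2, h3⟩ := main K le_rfl
  exact ⟨h1, h2, h3 hK1⟩


/-- The shrinking conditional gradient method: with `R_t = D_X/(√2)^t`,
`K + 1 ≥ 32 L/μ`, and each phase `t ≥ 1` consisting of `K` conditional gradient iterations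
on `X_{t−1} = {x ∈ X : ‖x − p_{t−1}‖ ≤ R_{t−1}}` started at `p_{t−1}`, producing `p_t`:
for every `t ≥ 1`, `‖p_t − x*‖ ≤ R_t` and
`f(p_t) − f(x*) ≤ (μ/2) R_t² = μ D_X²/2^{t+1}`; consequently, once
`t ≥ max(log₂(μ D_X²/(2ε)), 1)` (so that `K·t` oracle calls suffice), `f(p_t) − f(x*) ≤ ε`. -/
theorem stmt13 {E : Type*} [NormedAddCommGroup E] [NormedSpace ℝ E] [FiniteDimensional ℝ E]
    (X : Set E) (hXcp : IsCompact X) (hXcv : Convex ℝ X) (hXne : X.Nonempty)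
    (DX : ℝ) (hDX : IsGreatest {d : ℝ | ∃ a ∈ X, ∃ b ∈ X, d = ‖a - b‖} DX)
    (f : E → ℝ) (f' : E → E →L[ℝ] ℝ) (L μ : ℝ) (hμ : 0 < μ) (hμL : μ ≤ L)
    (hconv : ConvexOn ℝ X f)
    (hder : ∀ a ∈ X, HasFDerivAt f (f' a) a)
    (hsm : ∀ a ∈ X, ∀ b ∈ X, f b ≤ f a + f' a (b - a) + L / 2 * ‖b - a‖ ^ 2)
    (hsc : ∀ a ∈ X, ∀ b ∈ X, f a + f' a (b - a) + μ / 2 * ‖b - a‖ ^ 2 ≤ f b)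
    (xstar : E) (hxstarX : xstar ∈ X) (hxstarmin : ∀ z ∈ X, f xstar ≤ f z)
    (R : ℕ → ℝ) (hR : ∀ t : ℕ, R t = DX / (Real.sqrt 2) ^ t)
    (K : ℕ) (hK1 : 1 ≤ K) (hK : (K : ℝ) + 1 ≥ 32 * L / μ)
    (p : ℕ → E) (hp0 : p 0 ∈ X)
    (hiter : ∀ t ≥ 1, ∃ x y : ℕ → E,
      y 0 = p (t - 1) ∧
      (∀ k, 1 ≤ k → k ≤ K →
        (x k ∈ {z ∈ X | ‖z - p (t - 1)‖ ≤ R (t - 1)} ∧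
          ∀ z ∈ {z ∈ X | ‖z - p (t - 1)‖ ≤ R (t - 1)},
            f' (y (k - 1)) (x k) ≤ f' (y (k - 1)) z) ∧
        y k = (1 - 2 / ((k : ℝ) + 1)) • y (k - 1) + (2 / ((k : ℝ) + 1)) • x k) ∧
      p t = y K) :
    (∀ t ≥ 1, ‖p t - xstar‖ ≤ R t ∧
      f (p t) - f xstar ≤ μ / 2 * (R t) ^ 2 ∧
      μ / 2 * (R t) ^ 2 = μ * DX ^ 2 / 2 ^ (t + 1)) ∧
    (∀ ε > (0 : ℝ), ∀ t : ℕ,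
      (t : ℝ) ≥ max (Real.logb 2 (μ * DX ^ 2 / (2 * ε))) 1 →
      f (p t) - f xstar ≤ ε) := by
  have hL : 0 < L := lt_of_lt_of_le hμ hμL
  have hDX0 : 0 ≤ DX := by
    obtain ⟨a, ha, b, hb, hab⟩ := hDX.1
    rw [hab]; positivity
  have hRnn : ∀ t : ℕ, 0 ≤ R t := fun t => by rw [hR]; positivity
  have hRsq : ∀ t : ℕ, R t ^ 2 = DX ^ 2 / 2 ^ t := by
    intro t
    rw [hR, div_pow]
    congr 1
    rw [← pow_mul, mul_comm, pow_mul, Real.sq_sqrt (by norm_num : (0:ℝ) ≤ 2)]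
  have hfo : ∀ z ∈ X, 0 ≤ f' xstar (z - xstar) := fun z hz =>
    stmt13_fo X hXcv f f' L hL hsm xstar hxstarX hxstarmin z hz
  have hKmul : 32 * L ≤ μ * ((K:ℝ) + 1) := by
    rw [ge_iff_le, div_le_iff₀ hμ] at hK
    linarith
  have main : ∀ t : ℕ, p t ∈ X ∧ ‖p t - xstar‖ ≤ R t ∧
      (1 ≤ t → f (p t) - f xstar ≤ μ / 2 * R t ^ 2) := by
    intro t
    induction t with
    | zero =>
      refine ⟨hp0, ?_, fun h => by omega⟩
      have h0 : ‖p 0 - xstar‖ ≤ DX := hDX.2 ⟨p 0, hp0, xstar, hxstarX, rfl⟩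
      rw [hR]
      simpa using h0
    | succ t ih =>
      obtain ⟨hptX, hptn, _⟩ := ih
      obtain ⟨x, y, hy0, hstep, hpt⟩ := hiter (t+1) (by omega)
      simp only [Nat.add_sub_cancel] at hy0 hstep
      have hcg := stmt13_cg X hXcv f f' L μ hμ hμL hsm hsc xstar hxstarX hxstarmin
        (p t) hptX (R t) (hRnn t) (by rw [norm_sub_rev]; exact hptn) K hK1 x y hy0 hstep
      obtain ⟨hyX, _, hyval⟩ := hcg
      rw [← hpt] at hyX hyval
      have hRrel : R (t+1) ^ 2 = R t ^ 2 / 2 := by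
        rw [hRsq, hRsq, pow_succ]; ring
      have hbd : 8 * L * R t ^ 2 / ((K:ℝ) + 2) ≤ μ / 2 * R (t+1) ^ 2 := by
        rw [hRrel, div_le_iff₀ (by positivity : (0:ℝ) < (K:ℝ) + 2)]
        nlinarith [mul_le_mul_of_nonneg_right hKmul (sq_nonneg (R t)),
          mul_nonneg hμ.le (sq_nonneg (R t))]
      have hfval : f (p (t+1)) - f xstar ≤ μ / 2 * R (t+1) ^ 2 := le_trans hyval hbd
      have hqg : μ / 2 * ‖p (t+1) - xstar‖ ^ 2 ≤ f (p (t+1)) - f xstar := by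
        have h1 := hsc xstar hxstarX (p (t+1)) hyX
        have h2 := hfo (p (t+1)) hyX
        linarith
      have hnorm : ‖p (t+1) - xstar‖ ≤ R (t+1) := by
        have h3 : ‖p (t+1) - xstar‖ ^ 2 ≤ R (t+1) ^ 2 := by nlinarith
        nlinarith [norm_nonneg (p (t+1) - xstar), hRnn (t+1)]
      exact ⟨hyX, hnorm, fun _ => hfval⟩
  have heq : ∀ t : ℕ, μ / 2 * R t ^ 2 = μ * DX ^ 2 / 2 ^ (t + 1) := by
    intro t
    rw [hRsq, pow_succ]
    ring
  constructor
  · intro t ht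
    exact ⟨(main t).2.1, (main t).2.2 ht, heq t⟩
  · intro ε hε t ht
    have ht1 : 1 ≤ t := by
      have h4 : (1:ℝ) ≤ (t:ℝ) := le_trans (le_max_right _ 1) ht
      exact_mod_cast h4
    have hbd := (main t).2.2 ht1
    rw [heq t] at hbd
    refine le_trans hbd ?_
    rcases eq_or_lt_of_le hDX0 with hD0 | hD0
    · rw [← hD0]
      norm_num
      positivity
    · have hA : 0 < μ * DX ^ 2 / (2 * ε) := by positivity
      have hlog : Real.logb 2 (μ * DX ^ 2 / (2 * ε)) ≤ (t:ℝ) := le_trans (le_max_left _ _) ht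
      have h2t : μ * DX ^ 2 / (2 * ε) ≤ (2:ℝ) ^ ((t:ℕ):ℝ) :=
        (Real.logb_le_iff_le_rpow (by norm_num) hA).1 hlog
      rw [Real.rpow_natCast] at h2t
      rw [div_le_iff₀ (by positivity : (0:ℝ) < 2 * ε)] at h2t
      have hp2 : (2:ℝ) ^ (t+1) = 2 * 2 ^ t := by rw [pow_succ]; ring
      rw [div_le_iff₀ (by positivity : (0:ℝ) < 2 ^ (t+1)), hp2]
      nlinarith [h2t]
end

section
/- Consider the primal averaging conditional gradient (PA-CndG) method: given x₀ = y₀ ∈ X, for each k ≥ 1 set z_{k−1} := ((k−1)/(k+1)) y_{k−1} + (2/(k+1)) x_{k−1}, let x_k ∈ argmin_{x∈X} f'(z_{k−1})(x), and let y_k ∈ X be any point with f(y_k) ≤ f((1−γ_k) y_{k−1} + γ_k x_k), where γ_k := 2/(k+1) (this covers both the stepsize α_k = 2/(k+1) and the exact line-search stepsize). Then for every k ≥ 1 and every x ∈ X, f(y_k) − f(x) ≤ (2L/(k(k+1))) Σ_{i=1}^k ‖x_i − x_{i−1}‖² ≤ 2 L D_X²/(k+1). -/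
/-!
Each PA-CndG iteration is a conditional-gradient step taken from `z_{k-1}`: the trial point
`(1 - γ_k) y_{k-1} + γ_k x_k` differs from `z_{k-1}` by `γ_k (x_k - x_{k-1})`, so smoothness at
`z_{k-1}`, the gradient inequality of convexity and the optimality of `x_k` for the linearized
problem give `f(y_k) - f(u) ≤ (1 - γ_k)(f(y_{k-1}) - f(u)) + (L/2) γ_k² ‖x_k - x_{k-1}‖²`.
For `γ_k = 2/(k+1)` one has `k(k+1)(1 - γ_k) = (k-1)k` and `k(k+1)γ_k² ≤ 4`, so after multiplying
by `k(k+1)` the recursion telescopes.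
-/

theorem ConvexOn.add_fderiv_sub_le {E : Type*} [NormedAddCommGroup E] [NormedSpace ℝ E]
    {s : Set E} {f : E → ℝ} {φ : E →L[ℝ] ℝ} (hf : ConvexOn ℝ s f) {a b : E} (ha : a ∈ s)
    (hb : b ∈ s) (hφ : HasFDerivAt f φ a) : f a + φ (b - a) ≤ f b := by
  have hline : HasDerivAt (f ∘ AffineMap.lineMap a b) (φ (b - a)) (0 : ℝ) := by
    have hφ' : HasFDerivAt f φ (AffineMap.lineMap a b (0 : ℝ)) := by simpa using hφ
    simpa using hφ'.comp_hasDerivAt (0 : ℝ) (AffineMap.hasDerivAt_lineMap (a := a) (b := b))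
  have := (hf.comp_affineMap (AffineMap.lineMap a b)).le_slope_of_hasDerivAt
    (x := 0) (y := 1) (by simpa using ha) (by simpa using hb) one_pos hline
  simp only [slope_def_field, Function.comp_apply, AffineMap.lineMap_apply_zero,
    AffineMap.lineMap_apply_one, sub_zero, div_one] at this
  linarith

theorem ConvexOn.conditionalGradient_step {E : Type*} [NormedAddCommGroup E] [NormedSpace ℝ E]
    {X : Set E} {f : E → ℝ} {f' : E → E →L[ℝ] ℝ} {L : ℝ} (hf : ConvexOn ℝ X f)
    (hder : ∀ a ∈ X, HasFDerivAt f (f' a) a)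
    (hsmooth : ∀ a ∈ X, ∀ b ∈ X, f b ≤ f a + f' a (b - a) + L / 2 * ‖b - a‖ ^ 2)
    {y x₀ x₁ u : E} (hy : y ∈ X) (hx₀ : x₀ ∈ X) (hx₁ : x₁ ∈ X) (hu : u ∈ X)
    {γ : ℝ} (hγ₀ : 0 ≤ γ) (hγ₁ : γ ≤ 1)
    (hmin : ∀ v ∈ X, f' ((1 - γ) • y + γ • x₀) x₁ ≤ f' ((1 - γ) • y + γ • x₀) v) :
    f ((1 - γ) • y + γ • x₁) - f u ≤ (1 - γ) * (f y - f u) + L / 2 * γ ^ 2 * ‖x₁ - x₀‖ ^ 2 := by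
  set z := (1 - γ) • y + γ • x₀
  set w := (1 - γ) • y + γ • x₁
  have hz : z ∈ X := hf.1 hy hx₀ (by linarith) hγ₀ (by ring)
  have hw : w ∈ X := hf.1 hy hx₁ (by linarith) hγ₀ (by ring)
  have hlin : f' z (w - z) = (1 - γ) * f' z (y - z) + γ * f' z (x₁ - z) := by
    rw [show w - z = (1 - γ) • (y - z) + γ • (x₁ - z) by simp only [w, z]; module]
    simp only [map_add, map_smul, smul_eq_mul]
  have hnorm : ‖w - z‖ ^ 2 = γ ^ 2 * ‖x₁ - x₀‖ ^ 2 := by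
    rw [show w - z = γ • (x₁ - x₀) by simp only [w, z]; module, norm_smul,
      Real.norm_of_nonneg hγ₀, mul_pow]
  have hy' := hf.add_fderiv_sub_le hz hy (hder z hz)
  have hx₁' : f z + f' z (x₁ - z) ≤ f u := by
    have hu' := hf.add_fderiv_sub_le hz hu (hder z hz)
    simp only [map_sub] at hu' ⊢
    linarith [hmin u hu]
  have hsm := hsmooth z hz w hw
  rw [hlin, hnorm] at hsm
  linarith [mul_le_mul_of_nonneg_left hy' (sub_nonneg.2 hγ₁), mul_le_mul_of_nonneg_left hx₁' hγ₀]

theorem le_add_sum_Icc_of_le_add {α : Type*} [AddCommMonoid α] [PartialOrder α]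
    [IsOrderedAddMonoid α] {A b : ℕ → α} (h : ∀ k ≥ 1, A k ≤ A (k - 1) + b k) :
    ∀ n, A n ≤ A 0 + ∑ i ∈ Finset.Icc 1 n, b i
  | 0 => by simp
  | n + 1 => by
    rw [Finset.sum_Icc_succ_top (by omega), ← add_assoc]
    exact (h (n + 1) (by omega)).trans (add_le_add (le_add_sum_Icc_of_le_add h n) le_rfl)

theorem mul_add_one_mul_le_of_le_step_two_div {k e e' L d : ℝ} (hk : 1 ≤ k) (hL : 0 ≤ L)
    (hd : 0 ≤ d) (h : e ≤ (1 - 2 / (k + 1)) * e' + L / 2 * (2 / (k + 1)) ^ 2 * d) :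
    k * (k + 1) * e ≤ (k - 1) * k * e' + 2 * L * d := by
  have hk₁ : 0 < k + 1 := by linarith
  have hmul := mul_le_mul_of_nonneg_left h (by positivity : 0 ≤ k * (k + 1))
  have hrhs : k * (k + 1) * ((1 - 2 / (k + 1)) * e' + L / 2 * (2 / (k + 1)) ^ 2 * d)
      = (k - 1) * k * e' + 2 * L * d - 2 * L * d / (k + 1) := by
    field_simp
    ring
  have hrem : 0 ≤ 2 * L * d / (k + 1) := by positivity
  linarith

theorem sum_Icc_norm_sub_sq_le {E : Type*} [SeminormedAddCommGroup E] {X : Set E} {D : ℝ}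
    (hD : D ∈ upperBounds {d : ℝ | ∃ a ∈ X, ∃ b ∈ X, d = ‖a - b‖}) {x : ℕ → E}
    (hx : ∀ i, x i ∈ X) (k : ℕ) :
    ∑ i ∈ Finset.Icc 1 k, ‖x i - x (i - 1)‖ ^ 2 ≤ k * D ^ 2 := by
  have hterm : ∀ i ∈ Finset.Icc 1 k, ‖x i - x (i - 1)‖ ^ 2 ≤ D ^ 2 := fun i _ =>
    pow_le_pow_left₀ (norm_nonneg _) (hD ⟨x i, hx i, x (i - 1), hx (i - 1), rfl⟩) 2
  simpa using Finset.sum_le_card_nsmul _ _ _ hterm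

theorem primalAveraging_weighted_descent {E : Type*} [NormedAddCommGroup E] [NormedSpace ℝ E]
    {X : Set E} {f : E → ℝ} {f' : E → E →L[ℝ] ℝ} {L : ℝ} (hL : 0 ≤ L) (hf : ConvexOn ℝ X f)
    (hder : ∀ a ∈ X, HasFDerivAt f (f' a) a)
    (hsmooth : ∀ a ∈ X, ∀ b ∈ X, f b ≤ f a + f' a (b - a) + L / 2 * ‖b - a‖ ^ 2)
    {x y z : ℕ → E} {γ : ℕ → ℝ} (hγ : ∀ k : ℕ, γ k = 2 / (k + 1))
    (hxX : ∀ i, x i ∈ X) (hyX : ∀ i, y i ∈ X)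
    (hz : ∀ k ≥ 1, z (k - 1) =
      (((k : ℝ) - 1) / ((k : ℝ) + 1)) • y (k - 1) + (2 / ((k : ℝ) + 1)) • x (k - 1))
    (hxk : ∀ k ≥ 1, ∀ v ∈ X, f' (z (k - 1)) (x k) ≤ f' (z (k - 1)) v)
    (hyk : ∀ k ≥ 1, f (y k) ≤ f ((1 - γ k) • y (k - 1) + γ k • x k))
    {k : ℕ} (hk : 1 ≤ k) {u : E} (hu : u ∈ X) :
    k * (k + 1) * (f (y k) - f u) ≤
      (k - 1) * k * (f (y (k - 1)) - f u) + 2 * L * ‖x k - x (k - 1)‖ ^ 2 := by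
  have hzk : z (k - 1) = (1 - γ k) • y (k - 1) + γ k • x (k - 1) := by
    rw [hz k hk, hγ]
    congr 2
    field_simp
    ring
  have hγ₁ : γ k ≤ 1 := by
    rw [hγ, div_le_one (by positivity)]
    exact_mod_cast Nat.succ_le_succ hk
  have hdesc := (sub_le_sub_right (hyk k hk) (f u)).trans
    (hf.conditionalGradient_step hder hsmooth (hyX _) (hxX _) (hxX k) hu
      (by rw [hγ]; positivity) hγ₁ (hzk ▸ hxk k hk))
  exact mul_add_one_mul_le_of_le_step_two_div (by exact_mod_cast hk) hL (sq_nonneg _)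
    (hγ k ▸ hdesc)

theorem stmt14_general {E : Type*} [NormedAddCommGroup E] [NormedSpace ℝ E]
    (X : Set E)
    (DX : ℝ) (hDX : IsGreatest {d : ℝ | ∃ a ∈ X, ∃ b ∈ X, d = ‖a - b‖} DX)
    (f : E → ℝ) (f' : E → E →L[ℝ] ℝ) (L : ℝ) (hL : 0 < L)
    (hconv : ConvexOn ℝ X f)
    (hder : ∀ a ∈ X, HasFDerivAt f (f' a) a)
    (hsmooth : ∀ a ∈ X, ∀ b ∈ X, f b ≤ f a + f' a (b - a) + L / 2 * ‖b - a‖ ^ 2)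
    (x y z : ℕ → E) (γ : ℕ → ℝ) (hγ : ∀ k : ℕ, γ k = 2 / (k + 1))
    (hx0 : x 0 ∈ X) (hy0 : y 0 = x 0)
    (hz : ∀ k ≥ 1, z (k - 1) =
      (((k : ℝ) - 1) / ((k : ℝ) + 1)) • y (k - 1) + (2 / ((k : ℝ) + 1)) • x (k - 1))
    (hxk : ∀ k ≥ 1, x k ∈ X ∧ ∀ v ∈ X, f' (z (k - 1)) (x k) ≤ f' (z (k - 1)) v)
    (hyk : ∀ k ≥ 1, y k ∈ X ∧ f (y k) ≤ f ((1 - γ k) • y (k - 1) + γ k • x k)) :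
    ∀ k ≥ 1, ∀ u ∈ X,
      f (y k) - f u ≤
        2 * L / (k * (k + 1)) * ∑ i ∈ Finset.Icc 1 k, ‖x i - x (i - 1)‖ ^ 2 ∧
      2 * L / (k * (k + 1)) * ∑ i ∈ Finset.Icc 1 k, ‖x i - x (i - 1)‖ ^ 2 ≤
        2 * L * DX ^ 2 / (k + 1) := by
  have hxX : ∀ i, x i ∈ X := fun
    | 0 => hx0
    | i + 1 => (hxk (i + 1) (by omega)).1
  have hyX : ∀ i, y i ∈ X := fun
    | 0 => hy0 ▸ hx0
    | i + 1 => (hyk (i + 1) (by omega)).1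
  have hweighted : ∀ u ∈ X, ∀ k : ℕ, (k : ℝ) * (k + 1) * (f (y k) - f u) ≤
      2 * L * ∑ i ∈ Finset.Icc 1 k, ‖x i - x (i - 1)‖ ^ 2 := by
    intro u hu k
    have htelescope := le_add_sum_Icc_of_le_add (A := fun k : ℕ => (k : ℝ) * (k + 1) * (f (y k) - f u))
      (b := fun i => 2 * L * ‖x i - x (i - 1)‖ ^ 2) (fun k hk => ?_) k
    · simpa [Finset.mul_sum] using htelescope
    simpa [Nat.cast_sub hk] using primalAveraging_weighted_descent hL.le hconv hder hsmooth hγ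
      hxX hyX hz (fun k hk => (hxk k hk).2) (fun k hk => (hyk k hk).2) hk hu
  intro k hk u hu
  have hk₀ : (0 : ℝ) < k := by exact_mod_cast hk
  constructor
  · rw [div_mul_eq_mul_div, le_div_iff₀ (by positivity)]
    linarith [hweighted u hu k]
  · calc 2 * L / (k * (k + 1)) * ∑ i ∈ Finset.Icc 1 k, ‖x i - x (i - 1)‖ ^ 2
        ≤ 2 * L / (k * (k + 1)) * (k * DX ^ 2) :=
          mul_le_mul_of_nonneg_left (sum_Icc_norm_sub_sq_le hDX.2 hxX k) (by positivity)
      _ = 2 * L * DX ^ 2 / (k + 1) := by field_simp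

/-- Convergence of the primal averaging conditional gradient (PA-CndG)
method: with `z_{k−1} = ((k−1)/(k+1)) y_{k−1} + (2/(k+1)) x_{k−1}`,
`x_k ∈ argmin_{x∈X} f'(z_{k−1})(x)` and `f(y_k) ≤ f((1−γ_k) y_{k−1} + γ_k x_k)`,
`γ_k = 2/(k+1)`, one has for all `k ≥ 1` and `u ∈ X`:
`f(y_k) − f(u) ≤ (2L/(k(k+1))) ∑_{i=1}^k ‖x_i − x_{i−1}‖² ≤ 2 L D_X²/(k+1)`. -/
theorem stmt14 {E : Type*} [NormedAddCommGroup E] [NormedSpace ℝ E] [FiniteDimensional ℝ E]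
    (X : Set E) (hXcp : IsCompact X) (hXcv : Convex ℝ X) (hXne : X.Nonempty)
    (DX : ℝ) (hDX : IsGreatest {d : ℝ | ∃ a ∈ X, ∃ b ∈ X, d = ‖a - b‖} DX)
    (f : E → ℝ) (f' : E → E →L[ℝ] ℝ) (L : ℝ) (hL : 0 < L)
    (hconv : ConvexOn ℝ X f)
    (hder : ∀ a ∈ X, HasFDerivAt f (f' a) a)
    (hsmooth : ∀ a ∈ X, ∀ b ∈ X, f b ≤ f a + f' a (b - a) + L / 2 * ‖b - a‖ ^ 2)
    (x y z : ℕ → E) (γ : ℕ → ℝ) (hγ : ∀ k : ℕ, γ k = 2 / (k + 1))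
    (hx0 : x 0 ∈ X) (hy0 : y 0 = x 0)
    (hz : ∀ k ≥ 1, z (k - 1) =
      (((k : ℝ) - 1) / ((k : ℝ) + 1)) • y (k - 1) + (2 / ((k : ℝ) + 1)) • x (k - 1))
    (hxk : ∀ k ≥ 1, x k ∈ X ∧ ∀ v ∈ X, f' (z (k - 1)) (x k) ≤ f' (z (k - 1)) v)
    (hyk : ∀ k ≥ 1, y k ∈ X ∧ f (y k) ≤ f ((1 - γ k) • y (k - 1) + γ k • x k)) :
    ∀ k ≥ 1, ∀ u ∈ X,
      f (y k) - f u ≤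
        2 * L / (k * (k + 1)) * ∑ i ∈ Finset.Icc 1 k, ‖x i - x (i - 1)‖ ^ 2 ∧
      2 * L / (k * (k + 1)) * ∑ i ∈ Finset.Icc 1 k, ‖x i - x (i - 1)‖ ^ 2 ≤
        2 * L * DX ^ 2 / (k + 1) :=
  stmt14_general X DX hDX f f' L hL hconv hder hsmooth x y z γ hγ hx0 hy0 hz hxk hyk
end

section
/- In the primal averaging conditional gradient method with the explicit stepsize α_k = γ_k := 2/(k+1) (i.e., z_{k−1} := ((k−1)/(k+1)) y_{k−1} + (2/(k+1)) x_{k−1}, x_k ∈ argmin_{x∈X} f'(z_{k−1})(x), and y_k := (1−γ_k) y_{k−1} + γ_k x_k, starting from x₀ = y₀ ∈ X), the consecutive averaged points satisfy ‖z_k − z_{k−1}‖ ≤ 3 γ_k D_X for all k ≥ 1, and consequently the consecutive oracle inputs p_k := f'(z_{k−1}) satisfy ‖p_k − p_{k−1}‖_* = ‖f'(z_{k−1}) − f'(z_{k−2})‖_* ≤ 3 γ_{k−1} L D_X for all k ≥ 2. -/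
/-!
Writing `y_k = (1 - γ_k) y_{k-1} + γ_k x_k` turns the averaged point
`z_{k-1} = (1 - γ_k) y_{k-1} + γ_k x_{k-1}` into `y_k + γ_k (x_{k-1} - x_k)`, while
`z_k - y_k = γ_{k+1} (x_k - y_k)`. Hence `z_k - z_{k-1}` is a combination of two differences of
points of `X` with coefficients `γ_{k+1} ≤ γ_k`, so its norm is at most `2 γ_k D_X`; the dual-norm
bound then follows from the Lipschitz continuity of `f'`.
-/

open Set

lemma Convex.one_sub_smul_add_smul_mem {E : Type*} [AddCommGroup E] [Module ℝ E] {X : Set E}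
    (hX : Convex ℝ X) {a b : E} (ha : a ∈ X) (hb : b ∈ X) {t : ℝ} (ht : t ∈ Icc 0 1) :
    (1 - t) • a + t • b ∈ X :=
  hX ha hb (by linarith [ht.2]) ht.1 (by ring)

lemma Convex.mem_of_forall_mem_of_averaging {E : Type*} [AddCommGroup E] [Module ℝ E]
    {X : Set E} (hX : Convex ℝ X) {x y : ℕ → E} {γ : ℕ → ℝ} (hγ : ∀ k, γ (k + 1) ∈ Icc 0 1)
    (hx : ∀ k, x k ∈ X) (hy₀ : y 0 ∈ X)
    (hy : ∀ k, y (k + 1) = (1 - γ (k + 1)) • y k + γ (k + 1) • x (k + 1)) (k : ℕ) :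
    y k ∈ X := by
  induction k with
  | zero => exact hy₀
  | succ k ih =>
    exact hy k ▸ hX.one_sub_smul_add_smul_mem ih (hx (k + 1)) (hγ k)

lemma averaging_sub_averaging {R M : Type*} [CommRing R] [AddCommGroup M] [Module R M]
    (s t : R) (x x' y y' : M) (hy' : y' = (1 - t) • y + t • x') :
    ((1 - s) • y' + s • x') - ((1 - t) • y + t • x) = s • (x' - y') + t • (x' - x) := by
  subst hy'
  module

section Averaging

variable {E : Type*} [NormedAddCommGroup E] [NormedSpace ℝ E] {X : Set E} {D : ℝ}

lemma norm_averaging_sub_averaging_le (hD : ∀ a ∈ X, ∀ b ∈ X, ‖a - b‖ ≤ D) {s t : ℝ}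
    (hs : 0 ≤ s) (ht : 0 ≤ t) {x x' y y' : E} (hx : x ∈ X) (hx' : x' ∈ X) (hy'X : y' ∈ X)
    (hy' : y' = (1 - t) • y + t • x') :
    ‖((1 - s) • y' + s • x') - ((1 - t) • y + t • x)‖ ≤ (s + t) * D := by
  rw [averaging_sub_averaging s t x x' y y' hy', add_mul]
  calc _ ≤ ‖s • (x' - y')‖ + ‖t • (x' - x)‖ := norm_add_le _ _
    _ ≤ s * D + t * D := by
        rw [norm_smul, norm_smul, Real.norm_of_nonneg hs, Real.norm_of_nonneg ht]
        gcongr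
        exacts [hD _ hx' _ hy'X, hD _ hx' _ hx]

lemma norm_averagedPoint_succ_sub_le (hD : ∀ a ∈ X, ∀ b ∈ X, ‖a - b‖ ≤ D) {x y z : ℕ → E}
    {γ : ℕ → ℝ} (hγ₀ : ∀ k, 0 ≤ γ k) (hγ : Antitone γ) (hx : ∀ k, x k ∈ X) (hy : ∀ k, y k ∈ X)
    (hy_succ : ∀ k, y (k + 1) = (1 - γ (k + 1)) • y k + γ (k + 1) • x (k + 1))
    (hz : ∀ k, z k = (1 - γ (k + 1)) • y k + γ (k + 1) • x k) (k : ℕ) :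
    ‖z (k + 1) - z k‖ ≤ 2 * γ (k + 1) * D := by
  have hD₀ : 0 ≤ D := by simpa using hD _ (hx 0) _ (hx 0)
  calc ‖z (k + 1) - z k‖ ≤ (γ (k + 2) + γ (k + 1)) * D := by
        rw [hz, hz]
        exact norm_averaging_sub_averaging_le hD (hγ₀ _) (hγ₀ _) (hx k) (hx _) (hy _) (hy_succ k)
    _ ≤ 2 * γ (k + 1) * D := by
        gcongr
        linarith [hγ (Nat.le_succ (k + 1))]

end Averaging

lemma antitone_two_div_add_one : Antitone fun k : ℕ => (2 : ℝ) / (k + 1) :=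
  fun _ _ h => by dsimp only; gcongr

lemma two_div_add_one_le_one {k : ℕ} (hk : 1 ≤ k) : (2 : ℝ) / (k + 1) ≤ 1 := by
  rw [div_le_one (by positivity)]
  exact_mod_cast Nat.succ_le_succ hk

lemma one_sub_two_div_add_one (n : ℝ) (hn : n + 1 ≠ 0) : 1 - 2 / (n + 1) = (n - 1) / (n + 1) := by
  field_simp
  ring

theorem stmt15_general {E : Type*} [NormedAddCommGroup E] [NormedSpace ℝ E]
    (X : Set E) (hXcv : Convex ℝ X)
    (DX : ℝ) (hDX : IsGreatest {d : ℝ | ∃ a ∈ X, ∃ b ∈ X, d = ‖a - b‖} DX)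
    (f' : E → E →L[ℝ] ℝ) (L : ℝ) (hL : 0 < L)
    (hlip : ∀ a ∈ X, ∀ b ∈ X, ‖f' a - f' b‖ ≤ L * ‖a - b‖)
    (x y z : ℕ → E) (γ : ℕ → ℝ) (hγ : ∀ k : ℕ, γ k = 2 / (k + 1))
    (hx0 : x 0 ∈ X) (hy0 : y 0 = x 0)
    (hz : ∀ k ≥ 1, z (k - 1) =
      (((k : ℝ) - 1) / ((k : ℝ) + 1)) • y (k - 1) + (2 / ((k : ℝ) + 1)) • x (k - 1))
    (hxk : ∀ k ≥ 1, x k ∈ X ∧ ∀ v ∈ X, f' (z (k - 1)) (x k) ≤ f' (z (k - 1)) v)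
    (hyk : ∀ k ≥ 1, y k = (1 - γ k) • y (k - 1) + γ k • x k) :
    (∀ k ≥ 1, ‖z k - z (k - 1)‖ ≤ 3 * γ k * DX) ∧
    (∀ k ≥ 2, ‖f' (z (k - 1)) - f' (z (k - 2))‖ ≤ 3 * γ (k - 1) * L * DX) := by
  have hdiam : ∀ a ∈ X, ∀ b ∈ X, ‖a - b‖ ≤ DX := fun a ha b hb => hDX.2 ⟨a, ha, b, hb, rfl⟩
  have hγ₀ (k : ℕ) : 0 ≤ γ k := by rw [hγ]; positivity
  have hγ01 (k : ℕ) : γ (k + 1) ∈ Icc 0 1 := ⟨hγ₀ _, hγ _ ▸ two_div_add_one_le_one k.succ_pos⟩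
  have hxX (k : ℕ) : x k ∈ X := by
    cases k with
    | zero => exact hx0
    | succ k => exact (hxk (k + 1) k.succ_pos).1
  have hy_succ (k : ℕ) : y (k + 1) = (1 - γ (k + 1)) • y k + γ (k + 1) • x (k + 1) :=
    hyk (k + 1) k.succ_pos
  have hyX := hXcv.mem_of_forall_mem_of_averaging hγ01 hxX (hy0 ▸ hx0) hy_succ
  have hz_succ (k : ℕ) : z k = (1 - γ (k + 1)) • y k + γ (k + 1) • x k := by
    rw [hγ, one_sub_two_div_add_one _ (by positivity)]
    exact hz (k + 1) k.succ_pos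
  have hDX₀ : 0 ≤ DX := by simpa using hdiam _ hx0 _ hx0
  have hstep : ∀ k ≥ 1, ‖z k - z (k - 1)‖ ≤ 3 * γ k * DX := by
    intro _ hk
    obtain ⟨k, rfl⟩ := Nat.exists_eq_add_of_le' hk
    calc ‖z (k + 1) - z k‖ ≤ 2 * γ (k + 1) * DX :=
          norm_averagedPoint_succ_sub_le hdiam hγ₀ (funext hγ ▸ antitone_two_div_add_one)
            hxX hyX hy_succ hz_succ k
      _ ≤ 3 * γ (k + 1) * DX := by have := hγ₀ (k + 1); gcongr; norm_num
  refine ⟨hstep, fun k hk => ?_⟩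
  have hzX (k : ℕ) : z k ∈ X := hz_succ k ▸ hXcv.one_sub_smul_add_smul_mem (hyX k) (hxX k) (hγ01 k)
  calc ‖f' (z (k - 1)) - f' (z (k - 2))‖ ≤ L * ‖z (k - 1) - z (k - 1 - 1)‖ := by
        rw [Nat.sub_sub]
        exact hlip _ (hzX _) _ (hzX _)
    _ ≤ L * (3 * γ (k - 1) * DX) := by gcongr; exact hstep (k - 1) (by omega)
    _ = 3 * γ (k - 1) * L * DX := by ring

/-- In the PA-CndG method with stepsize `α_k = γ_k = 2/(k+1)`, the averaged
points satisfy `‖z_k − z_{k−1}‖ ≤ 3 γ_k D_X` for all `k ≥ 1`, and hence the oracle inputs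
`p_k = f'(z_{k−1})` satisfy `‖f'(z_{k−1}) − f'(z_{k−2})‖_* ≤ 3 γ_{k−1} L D_X` for `k ≥ 2`,
provided `f'` is `L`-Lipschitz on `X` (in dual norm). -/
theorem stmt15 {E : Type*} [NormedAddCommGroup E] [NormedSpace ℝ E] [FiniteDimensional ℝ E]
    (X : Set E) (hXcp : IsCompact X) (hXcv : Convex ℝ X) (hXne : X.Nonempty)
    (DX : ℝ) (hDX : IsGreatest {d : ℝ | ∃ a ∈ X, ∃ b ∈ X, d = ‖a - b‖} DX)
    (f : E → ℝ) (f' : E → E →L[ℝ] ℝ) (L : ℝ) (hL : 0 < L)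
    (hconv : ConvexOn ℝ X f)
    (hder : ∀ a ∈ X, HasFDerivAt f (f' a) a)
    (hlip : ∀ a ∈ X, ∀ b ∈ X, ‖f' a - f' b‖ ≤ L * ‖a - b‖)
    (x y z : ℕ → E) (γ : ℕ → ℝ) (hγ : ∀ k : ℕ, γ k = 2 / (k + 1))
    (hx0 : x 0 ∈ X) (hy0 : y 0 = x 0)
    (hz : ∀ k ≥ 1, z (k - 1) =
      (((k : ℝ) - 1) / ((k : ℝ) + 1)) • y (k - 1) + (2 / ((k : ℝ) + 1)) • x (k - 1))
    (hxk : ∀ k ≥ 1, x k ∈ X ∧ ∀ v ∈ X, f' (z (k - 1)) (x k) ≤ f' (z (k - 1)) v)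
    (hyk : ∀ k ≥ 1, y k = (1 - γ k) • y (k - 1) + γ k • x k) :
    (∀ k ≥ 1, ‖z k - z (k - 1)‖ ≤ 3 * γ k * DX) ∧
    (∀ k ≥ 2, ‖f' (z (k - 1)) - f' (z (k - 2))‖ ≤ 3 * γ (k - 1) * L * DX) :=
  stmt15_general X hXcv DX hDX f' L hL hlip x y z γ hγ hx0 hy0 hz hxk hyk
end

section
/- Consider the primal-dual averaging conditional gradient (PDA-CndG) method: let θ_k > 0 satisfy θ_k/Θ_k = γ_k := 2/(k+1) where Θ_k := Σ_{i=1}^k θ_i (e.g., θ_k = k); given x₀ = y₀ ∈ X, for each k ≥ 1 set z_{k−1} := ((k−1)/(k+1)) y_{k−1} + (2/(k+1)) x_{k−1}, let x_k ∈ argmin_{x∈X} Σ_{i=1}^k θ_i f'(z_{i−1})(x), and let y_k ∈ X be any point with f(y_k) ≤ f((1−γ_k) y_{k−1} + γ_k x_k) (this covers both the stepsize α_k = 2/(k+1) and the exact line-search stepsize). Define Ψ_k(x) := Θ_k^{-1} Σ_{i=1}^k θ_i [f(z_{i−1}) + f'(z_{i−1})(x − z_{i−1})]. Then for every k ≥ 1: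 Ψ_k(x_k) ≤ min_{x∈X} f(x) ≤ f(y_k) and f(y_k) − Ψ_k(x_k) ≤ (2L/(k(k+1))) Σ_{i=1}^k ‖x_i − x_{i−1}‖² ≤ 2 L D_X²/(k+1); in particular f(y_k) − min_{x∈X} f(x) ≤ 2 L D_X²/(k+1). -/
/-! The tangent models `f (z i) + f' (z i) (· - z i)` lie below `f` on `X` by convexity, hence so
does their weighted average `Ψ k`, and `Ψ k (x k) ≤ min_X f` because `x k` minimises it. For the
upper bound, `z (k-1)` and `w := (1 - γ k) • y (k-1) + γ k • x k` differ by `γ k • (x k - x (k-1))`,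
so smoothness at `z (k-1)` plus the tangent inequality at `y (k-1)` gives
`Θ k f (y k) ≤ Θ (k-1) f (y (k-1)) + θ k (tangent at x k) + L/2 Θ k γ k² ‖x k - x (k-1)‖²`.
Summing, and using that `x (k-1)` minimises the previous model, yields
`Θ k (f (y k) - Ψ k (x k)) ≤ L/2 ∑ Θ i γ i² ‖x i - x (i-1)‖²`. Finally `θ k / Θ k = 2/(k+1)`
forces `Θ k = θ 1 k (k+1)/2`, so every coefficient `Θ i γ i² / Θ k` is at most `4/(k(k+1))`. -/

open Finset AffineMap

section

variable {E : Type*} [NormedAddCommGroup E] [NormedSpace ℝ E]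

theorem ConvexOn.add_apply_sub_le_of_hasFDerivAt
    {s : Set E} {f : E → ℝ} {φ : E →L[ℝ] ℝ} {a b : E} (hf : ConvexOn ℝ s f)
    (ha : a ∈ s) (hb : b ∈ s) (hφ : HasFDerivAt f φ a) : f a + φ (b - a) ≤ f b := by
  have hline : ConvexOn ℝ (lineMap a b ⁻¹' s) (f ∘ lineMap a b) := hf.comp_affineMap _
  have hderiv : HasDerivAt (f ∘ lineMap a b) (φ (b - a)) (0 : ℝ) := by
    rw [← lineMap_apply_zero (k := ℝ) a b] at hφ
    exact hφ.comp_hasDerivAt 0 hasDerivAt_lineMap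
  have := hline.le_slope_of_hasDerivAt (x := 0) (y := 1) (by simp [ha]) (by simp [hb]) one_pos
    hderiv
  simp only [slope_def_field, Function.comp_apply, lineMap_apply_zero, lineMap_apply_one,
    sub_zero, div_one] at this
  linarith

theorem ConvexOn.apply_combo_le_of_smooth {s : Set E} {f : E → ℝ} {φ : E →L[ℝ] ℝ}
    {L γ : ℝ} {y v v' z : E} (hf : ConvexOn ℝ s f) (hz : z ∈ s) (hy : y ∈ s)
    (hφ : HasFDerivAt f φ z) (hγ : γ ≤ 1) (hzyv : z = (1 - γ) • y + γ • v)
    (hsmooth : f ((1 - γ) • y + γ • v') ≤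
      f z + φ ((1 - γ) • y + γ • v' - z) + L / 2 * ‖(1 - γ) • y + γ • v' - z‖ ^ 2) :
    f ((1 - γ) • y + γ • v') ≤
      (1 - γ) * f y + γ * (f z + φ (v' - z)) + L / 2 * γ ^ 2 * ‖v' - v‖ ^ 2 := by
  have hstep : (1 - γ) • y + γ • v' - z = (1 - γ) • (y - z) + γ • (v' - z) := by module
  have hshift : (1 - γ) • y + γ • v' - z = γ • (v' - v) := by rw [hzyv]; module
  have htangent := mul_le_mul_of_nonneg_left (hf.add_apply_sub_le_of_hasFDerivAt hz hy hφ)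
    (sub_nonneg.2 hγ)
  rw [hstep, map_add, map_smul, map_smul, smul_eq_mul, smul_eq_mul, ← hstep, hshift, norm_smul,
    mul_pow, Real.norm_eq_abs, sq_abs] at hsmooth
  linarith

namespace PDACndG

section Weights

variable {θ Θ γ : ℕ → ℝ}

theorem sum_weights_pos (hθ : ∀ k ≥ 1, 0 < θ k) (hΘ : ∀ k, Θ k = ∑ i ∈ Icc 1 k, θ i) {k : ℕ}
    (hk : 1 ≤ k) : 0 < Θ k :=
  hΘ k ▸ sum_pos (fun i hi => hθ i (mem_Icc.1 hi).1) (nonempty_Icc.2 hk)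

theorem sum_weights_succ (hΘ : ∀ k, Θ k = ∑ i ∈ Icc 1 k, θ i) (k : ℕ) :
    Θ (k + 1) = Θ k + θ (k + 1) := by
  rw [hΘ, hΘ, sum_Icc_succ_top (Nat.le_add_left 1 k)]

theorem sum_weights_mul_ratio (hθ : ∀ k ≥ 1, 0 < θ k) (hΘ : ∀ k, Θ k = ∑ i ∈ Icc 1 k, θ i)
    (hθγ : ∀ k ≥ 1, θ k / Θ k = γ k) {k : ℕ} (hk : 1 ≤ k) : Θ k * γ k = θ k := by
  rw [← hθγ k hk, mul_div_cancel₀ _ (sum_weights_pos hθ hΘ hk).ne']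

theorem sum_weights_mul_one_sub_ratio (hθ : ∀ k ≥ 1, 0 < θ k)
    (hΘ : ∀ k, Θ k = ∑ i ∈ Icc 1 k, θ i) (hθγ : ∀ k ≥ 1, θ k / Θ k = γ k) (k : ℕ) :
    Θ (k + 1) * (1 - γ (k + 1)) = Θ k := by
  rw [mul_one_sub, sum_weights_mul_ratio hθ hΘ hθγ (Nat.le_add_left 1 k),
    sum_weights_succ hΘ k, add_sub_cancel_right]

theorem ratio_mem_Icc (hθ : ∀ k ≥ 1, 0 < θ k) (hΘ : ∀ k, Θ k = ∑ i ∈ Icc 1 k, θ i)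
    (hθγ : ∀ k ≥ 1, θ k / Θ k = γ k) (k : ℕ) : γ (k + 1) ∈ Set.Icc 0 1 := by
  have hΘk : 0 ≤ Θ k := by rw [hΘ]; exact sum_nonneg fun i hi => (hθ i (mem_Icc.1 hi).1).le
  have h1 := sum_weights_mul_ratio hθ hΘ hθγ (Nat.le_add_left 1 k)
  have h2 := sum_weights_mul_one_sub_ratio hθ hΘ hθγ k
  constructor <;> nlinarith [hθ (k + 1) (Nat.le_add_left 1 k)]

theorem sum_weights_eq_of_ratio_eq (hθ : ∀ k ≥ 1, 0 < θ k) (hΘ : ∀ k, Θ k = ∑ i ∈ Icc 1 k, θ i)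
    (hγ : ∀ k : ℕ, γ k = 2 / (k + 1)) (hθγ : ∀ k ≥ 1, θ k / Θ k = γ k) {k : ℕ} (hk : 1 ≤ k) :
    Θ k = θ 1 * k * (k + 1) / 2 := by
  induction k, hk using Nat.le_induction with
  | base => simp [hΘ]; ring
  | succ k hk ih =>
    have hrec := sum_weights_mul_one_sub_ratio hθ hΘ hθγ k
    rw [hγ, ih] at hrec
    have hk0 : (k : ℝ) ≠ 0 := by positivity
    push_cast at hrec ⊢
    field_simp at hrec
    have hcancel : (Θ (k + 1) * 2) * k = (θ 1 * (k + 1) * (k + 1 + 1)) * k := by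
      linear_combination hrec
    linarith [mul_right_cancel₀ hk0 hcancel]

theorem sum_weights_inv_mul_sum_le (hθ : ∀ k ≥ 1, 0 < θ k) (hΘ : ∀ k, Θ k = ∑ i ∈ Icc 1 k, θ i)
    (hγ : ∀ k : ℕ, γ k = 2 / (k + 1)) (hθγ : ∀ k ≥ 1, θ k / Θ k = γ k) {L : ℝ} (hL : 0 ≤ L)
    {d : ℕ → ℝ} (hd : ∀ i, 0 ≤ d i) {k : ℕ} (hk : 1 ≤ k) :
    (Θ k)⁻¹ * (L / 2 * ∑ i ∈ Icc 1 k, Θ i * γ i ^ 2 * d i) ≤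
      2 * L / (k * (k + 1)) * ∑ i ∈ Icc 1 k, d i := by
  rw [mul_sum, mul_sum, mul_sum]
  refine sum_le_sum fun i hi => ?_
  have hi1 := (mem_Icc.1 hi).1
  have hθ1 := hθ 1 le_rfl
  have hcoef : (Θ k)⁻¹ * (L / 2 * Θ i * γ i ^ 2) = 2 * L / (k * (k + 1)) * (i / (i + 1)) := by
    rw [sum_weights_eq_of_ratio_eq hθ hΘ hγ hθγ hk, sum_weights_eq_of_ratio_eq hθ hΘ hγ hθγ hi1, hγ]
    field_simp
  calc (Θ k)⁻¹ * (L / 2 * (Θ i * γ i ^ 2 * d i))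
      = 2 * L / (k * (k + 1)) * (i / (i + 1)) * d i := by rw [← hcoef]; ring
    _ ≤ 2 * L / (k * (k + 1)) * d i := by
      refine mul_le_mul_of_nonneg_right (mul_le_of_le_one_right (by positivity) ?_) (hd i)
      rw [div_le_one (by positivity)]
      linarith

end Weights

variable (f : E → ℝ) (f' : E → E →L[ℝ] ℝ) (θ : ℕ → ℝ) (z : ℕ → E)

/-- `modelSum f f' θ z k` is `Θ k • Ψ k`. -/
def modelSum (k : ℕ) (v : E) : ℝ :=
  ∑ i ∈ Icc 1 k, θ i * (f (z (i - 1)) + f' (z (i - 1)) (v - z (i - 1)))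

variable {f f' θ z}

@[simp]
theorem modelSum_zero (v : E) : modelSum f f' θ z 0 v = 0 := by simp [modelSum]

theorem modelSum_succ (k : ℕ) (v : E) : modelSum f f' θ z (k + 1) v =
    modelSum f f' θ z k v + θ (k + 1) * (f (z k) + f' (z k) (v - z k)) := by
  rw [modelSum, sum_Icc_succ_top (Nat.le_add_left 1 k), Nat.add_sub_cancel]
  rfl

theorem modelSum_eq_add_sum (k : ℕ) (v : E) : modelSum f f' θ z k v =
    modelSum f f' θ z k 0 + ∑ i ∈ Icc 1 k, θ i * f' (z (i - 1)) v := by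
  simp only [modelSum, ← sum_add_distrib, map_sub]
  refine sum_congr rfl fun i _ => ?_
  simp only [map_zero]
  ring

theorem modelSum_le_of_sum_le {k : ℕ} {u v : E}
    (h : ∑ i ∈ Icc 1 k, θ i * f' (z (i - 1)) u ≤ ∑ i ∈ Icc 1 k, θ i * f' (z (i - 1)) v) :
    modelSum f f' θ z k u ≤ modelSum f f' θ z k v := by
  rw [modelSum_eq_add_sum k u, modelSum_eq_add_sum k v]
  linarith

theorem modelSum_le_sum_mul {s : Set E} (hf : ConvexOn ℝ s f)
    (hder : ∀ a ∈ s, HasFDerivAt f (f' a) a) (hθ : ∀ k ≥ 1, 0 < θ k) (hz : ∀ k, z k ∈ s)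
    (k : ℕ) {u : E} (hu : u ∈ s) : modelSum f f' θ z k u ≤ (∑ i ∈ Icc 1 k, θ i) * f u := by
  rw [modelSum, sum_mul]
  refine sum_le_sum fun i hi => mul_le_mul_of_nonneg_left ?_ (hθ i (mem_Icc.1 hi).1).le
  exact hf.add_apply_sub_le_of_hasFDerivAt (hz _) hu (hder _ (hz _))

theorem inv_mul_modelSum_le {s : Set E} {Θ : ℕ → ℝ} {x : ℕ → E} (hf : ConvexOn ℝ s f)
    (hder : ∀ a ∈ s, HasFDerivAt f (f' a) a) (hθ : ∀ k ≥ 1, 0 < θ k)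
    (hΘ : ∀ k, Θ k = ∑ i ∈ Icc 1 k, θ i) (hz : ∀ k, z k ∈ s)
    (hxmin : ∀ k, ∀ v ∈ s, modelSum f f' θ z k (x k) ≤ modelSum f f' θ z k v) {k : ℕ}
    (hk : 1 ≤ k) {u : E} (hu : u ∈ s) : (Θ k)⁻¹ * modelSum f f' θ z k (x k) ≤ f u := by
  have hΘk := sum_weights_pos hθ hΘ hk
  rw [inv_mul_le_iff₀ hΘk, hΘ]
  exact (hxmin k u hu).trans (modelSum_le_sum_mul hf hder hθ hz k hu)

variable {s : Set E} {L : ℝ} {Θ γ : ℕ → ℝ} {x y : ℕ → E}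

theorem combo_mem (hs : Convex ℝ s) (hθ : ∀ k ≥ 1, 0 < θ k)
    (hΘ : ∀ k, Θ k = ∑ i ∈ Icc 1 k, θ i) (hθγ : ∀ k ≥ 1, θ k / Θ k = γ k)
    (hx : ∀ k, x k ∈ s) (hy : ∀ k, y k ∈ s)
    (hz : ∀ k, z k = (1 - γ (k + 1)) • y k + γ (k + 1) • x k) (k : ℕ) : z k ∈ s := by
  obtain ⟨hγ0, hγ1⟩ := ratio_mem_Icc hθ hΘ hθγ k
  exact hz k ▸ hs (hy k) (hx k) (sub_nonneg.2 hγ1) hγ0 (sub_add_cancel 1 _)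

theorem sum_weights_mul_le_modelSum_add (hs : Convex ℝ s) (hf : ConvexOn ℝ s f)
    (hder : ∀ a ∈ s, HasFDerivAt f (f' a) a)
    (hsmooth : ∀ a ∈ s, ∀ b ∈ s, f b ≤ f a + f' a (b - a) + L / 2 * ‖b - a‖ ^ 2)
    (hθ : ∀ k ≥ 1, 0 < θ k) (hΘ : ∀ k, Θ k = ∑ i ∈ Icc 1 k, θ i)
    (hθγ : ∀ k ≥ 1, θ k / Θ k = γ k) (hx : ∀ k, x k ∈ s) (hy : ∀ k, y k ∈ s)
    (hz : ∀ k, z k = (1 - γ (k + 1)) • y k + γ (k + 1) • x k)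
    (hxmin : ∀ k, ∀ v ∈ s, modelSum f f' θ z k (x k) ≤ modelSum f f' θ z k v)
    (hyle : ∀ k, f (y (k + 1)) ≤ f ((1 - γ (k + 1)) • y k + γ (k + 1) • x (k + 1))) (k : ℕ) :
    Θ k * f (y k) ≤
      modelSum f f' θ z k (x k) + L / 2 * ∑ i ∈ Icc 1 k, Θ i * γ i ^ 2 * ‖x i - x (i - 1)‖ ^ 2 := by
  induction k with
  | zero => simp [hΘ]
  | succ k ih =>
    obtain ⟨hγ0, hγ1⟩ := ratio_mem_Icc hθ hΘ hθγ k
    have hzk := combo_mem hs hθ hΘ hθγ hx hy hz k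
    have hw : (1 - γ (k + 1)) • y k + γ (k + 1) • x (k + 1) ∈ s :=
      hs (hy k) (hx (k + 1)) (sub_nonneg.2 hγ1) hγ0 (sub_add_cancel 1 _)
    have hdescent := (hyle k).trans <| hf.apply_combo_le_of_smooth hzk (hy k) (hder _ hzk) hγ1
      (hz k) (hsmooth _ hzk _ hw)
    have hscaled := mul_le_mul_of_nonneg_left hdescent
      (sum_weights_pos hθ hΘ (Nat.le_add_left 1 k)).le
    have hΘγ := sum_weights_mul_ratio hθ hΘ hθγ (Nat.le_add_left 1 k)
    have hΘγ' := sum_weights_mul_one_sub_ratio hθ hΘ hθγ k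
    have hmodel := hxmin k (x (k + 1)) (hx (k + 1))
    rw [modelSum_succ, sum_Icc_succ_top (Nat.le_add_left 1 k), Nat.add_sub_cancel]
    linear_combination hscaled + ih + hmodel
      + (f (y k)) * hΘγ' + (f (z k) + f' (z k) (x (k + 1) - z k)) * hΘγ

theorem eq_combo_of_eq_div (hγ : ∀ k : ℕ, γ k = 2 / (k + 1))
    (hz : ∀ k ≥ 1, z (k - 1) =
      (((k : ℝ) - 1) / ((k : ℝ) + 1)) • y (k - 1) + (2 / ((k : ℝ) + 1)) • x (k - 1)) (k : ℕ) :
    z k = (1 - γ (k + 1)) • y k + γ (k + 1) • x k := by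
  have h := hz (k + 1) k.succ_pos
  rw [Nat.add_sub_cancel] at h
  rw [h, hγ]
  push_cast
  congr 2
  field_simp
  ring

end PDACndG

end

theorem PDACndG.mul_sum_norm_sub_sq_le {E : Type*} [SeminormedAddCommGroup E] {L D : ℝ}
    {x : ℕ → E} (hL : 0 ≤ L) (hD : ∀ i, ‖x i - x (i - 1)‖ ≤ D) (k : ℕ) :
    2 * L / (k * (k + 1)) * ∑ i ∈ Icc 1 k, ‖x i - x (i - 1)‖ ^ 2 ≤ 2 * L * D ^ 2 / (k + 1) := by
  rcases k.eq_zero_or_pos with rfl | hk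
  · simp only [CharP.cast_eq_zero, zero_mul, div_zero, zero_add]
    positivity
  calc _ ≤ 2 * L / (k * (k + 1)) * (k * D ^ 2) := by
        gcongr
        simpa using sum_le_card_nsmul (Icc 1 k) _ _ fun i _ =>
          pow_le_pow_left₀ (norm_nonneg _) (hD i) 2
    _ = 2 * L * D ^ 2 / (k + 1) := by
      have : (k : ℝ) ≠ 0 := by positivity
      field_simp

open PDACndG

theorem stmt18_general {E : Type*} [NormedAddCommGroup E] [NormedSpace ℝ E]
    (X : Set E) (hXcv : Convex ℝ X)
    (DX : ℝ) (hDX : IsGreatest {d : ℝ | ∃ a ∈ X, ∃ b ∈ X, d = ‖a - b‖} DX)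
    (f : E → ℝ) (f' : E → E →L[ℝ] ℝ) (L : ℝ) (hL : 0 < L)
    (hconv : ConvexOn ℝ X f)
    (hder : ∀ a ∈ X, HasFDerivAt f (f' a) a)
    (hsmooth : ∀ a ∈ X, ∀ b ∈ X, f b ≤ f a + f' a (b - a) + L / 2 * ‖b - a‖ ^ 2)
    (θ Θ : ℕ → ℝ) (hθ : ∀ k ≥ 1, 0 < θ k)
    (hΘ : ∀ k : ℕ, Θ k = ∑ i ∈ Finset.Icc 1 k, θ i)
    (γ : ℕ → ℝ) (hγ : ∀ k : ℕ, γ k = 2 / (k + 1))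
    (hθγ : ∀ k ≥ 1, θ k / Θ k = γ k)
    (x y z : ℕ → E)
    (hx0 : x 0 ∈ X) (hy0 : y 0 = x 0)
    (hz : ∀ k ≥ 1, z (k - 1) =
      (((k : ℝ) - 1) / ((k : ℝ) + 1)) • y (k - 1) + (2 / ((k : ℝ) + 1)) • x (k - 1))
    (hxk : ∀ k ≥ 1, x k ∈ X ∧ ∀ v ∈ X,
      (∑ i ∈ Finset.Icc 1 k, θ i * f' (z (i - 1)) (x k)) ≤
        ∑ i ∈ Finset.Icc 1 k, θ i * f' (z (i - 1)) v)
    (hyk : ∀ k ≥ 1, y k ∈ X ∧ f (y k) ≤ f ((1 - γ k) • y (k - 1) + γ k • x k))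
    (Ψ : ℕ → E → ℝ)
    (hΨ : ∀ k ≥ 1, ∀ v, Ψ k v =
      (Θ k)⁻¹ * ∑ i ∈ Finset.Icc 1 k, θ i * (f (z (i - 1)) + f' (z (i - 1)) (v - z (i - 1)))) :
    ∀ k ≥ 1,
      (∀ u ∈ X, Ψ k (x k) ≤ f u ∧ f (y k) - f u ≤ 2 * L * DX ^ 2 / (k + 1)) ∧
      f (y k) - Ψ k (x k) ≤
        2 * L / (k * (k + 1)) * ∑ i ∈ Finset.Icc 1 k, ‖x i - x (i - 1)‖ ^ 2 ∧
      2 * L / (k * (k + 1)) * ∑ i ∈ Finset.Icc 1 k, ‖x i - x (i - 1)‖ ^ 2 ≤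
        2 * L * DX ^ 2 / (k + 1) := by
  have hxX : ∀ k, x k ∈ X := by rintro (_ | k); exacts [hx0, (hxk (k + 1) k.succ_pos).1]
  have hyX : ∀ k, y k ∈ X := by rintro (_ | k); exacts [hy0 ▸ hx0, (hyk (k + 1) k.succ_pos).1]
  have hzγ := eq_combo_of_eq_div hγ hz
  have hzX := combo_mem hXcv hθ hΘ hθγ hxX hyX hzγ
  have hxmin : ∀ k, ∀ v ∈ X, modelSum f f' θ z k (x k) ≤ modelSum f f' θ z k v := by
    rintro (_ | k) v hv
    · simp
    · exact modelSum_le_of_sum_le ((hxk (k + 1) k.succ_pos).2 v hv)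
  have hbound := sum_weights_mul_le_modelSum_add hXcv hconv hder hsmooth hθ hΘ hθγ hxX hyX hzγ
    hxmin fun k => (hyk (k + 1) k.succ_pos).2
  intro k hk
  have hΘk := sum_weights_pos hθ hΘ hk
  have hΨk : Ψ k (x k) = (Θ k)⁻¹ * modelSum f f' θ z k (x k) := hΨ k hk _
  have hlower : ∀ u ∈ X, Ψ k (x k) ≤ f u := fun u hu =>
    hΨk ▸ inv_mul_modelSum_le hconv hder hθ hΘ hzX hxmin hk hu
  have hgap : f (y k) - Ψ k (x k) ≤
      2 * L / (k * (k + 1)) * ∑ i ∈ Icc 1 k, ‖x i - x (i - 1)‖ ^ 2 := calc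
    f (y k) - Ψ k (x k) = (Θ k)⁻¹ * (Θ k * f (y k) - modelSum f f' θ z k (x k)) := by
      rw [hΨk, mul_sub, inv_mul_cancel_left₀ hΘk.ne']
    _ ≤ (Θ k)⁻¹ * (L / 2 * ∑ i ∈ Icc 1 k, Θ i * γ i ^ 2 * ‖x i - x (i - 1)‖ ^ 2) := by
      gcongr
      linarith [hbound k]
    _ ≤ _ := sum_weights_inv_mul_sum_le hθ hΘ hγ hθγ hL.le (fun _ => sq_nonneg _) hk
  have hdiam := mul_sum_norm_sub_sq_le hL.le (fun i => hDX.2 ⟨_, hxX i, _, hxX (i - 1), rfl⟩) k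
  exact ⟨fun u hu => ⟨hlower u hu, by linarith [hlower u hu]⟩, hgap, hdiam⟩

/-- Convergence of the primal-dual averaging conditional gradient
(PDA-CndG) method: with `θ_k > 0`, `θ_k/Θ_k = γ_k = 2/(k+1)`,
`z_{k−1} = ((k−1)/(k+1)) y_{k−1} + (2/(k+1)) x_{k−1}`,
`x_k ∈ argmin_{x∈X} ∑_{i=1}^k θ_i f'(z_{i−1})(x)`, and
`f(y_k) ≤ f((1−γ_k) y_{k−1} + γ_k x_k)`, the lower model
`Ψ_k(x) = Θ_k^{-1} ∑_{i=1}^k θ_i [f(z_{i−1}) + f'(z_{i−1})(x − z_{i−1})]` satisfies, for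
every `k ≥ 1`: `Ψ_k(x_k) ≤ min_X f ≤ f(y_k)` and
`f(y_k) − Ψ_k(x_k) ≤ (2L/(k(k+1))) ∑_{i=1}^k ‖x_i − x_{i−1}‖² ≤ 2 L D_X²/(k+1)`;
in particular `f(y_k) − min_X f ≤ 2 L D_X²/(k+1)`. -/
theorem stmt18 {E : Type*} [NormedAddCommGroup E] [NormedSpace ℝ E] [FiniteDimensional ℝ E]
    (X : Set E) (hXcp : IsCompact X) (hXcv : Convex ℝ X) (hXne : X.Nonempty)
    (DX : ℝ) (hDX : IsGreatest {d : ℝ | ∃ a ∈ X, ∃ b ∈ X, d = ‖a - b‖} DX)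
    (f : E → ℝ) (f' : E → E →L[ℝ] ℝ) (L : ℝ) (hL : 0 < L)
    (hconv : ConvexOn ℝ X f)
    (hder : ∀ a ∈ X, HasFDerivAt f (f' a) a)
    (hsmooth : ∀ a ∈ X, ∀ b ∈ X, f b ≤ f a + f' a (b - a) + L / 2 * ‖b - a‖ ^ 2)
    (θ Θ : ℕ → ℝ) (hθ : ∀ k ≥ 1, 0 < θ k)
    (hΘ : ∀ k : ℕ, Θ k = ∑ i ∈ Finset.Icc 1 k, θ i)
    (γ : ℕ → ℝ) (hγ : ∀ k : ℕ, γ k = 2 / (k + 1))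
    (hθγ : ∀ k ≥ 1, θ k / Θ k = γ k)
    (x y z : ℕ → E)
    (hx0 : x 0 ∈ X) (hy0 : y 0 = x 0)
    (hz : ∀ k ≥ 1, z (k - 1) =
      (((k : ℝ) - 1) / ((k : ℝ) + 1)) • y (k - 1) + (2 / ((k : ℝ) + 1)) • x (k - 1))
    (hxk : ∀ k ≥ 1, x k ∈ X ∧ ∀ v ∈ X,
      (∑ i ∈ Finset.Icc 1 k, θ i * f' (z (i - 1)) (x k)) ≤
        ∑ i ∈ Finset.Icc 1 k, θ i * f' (z (i - 1)) v)
    (hyk : ∀ k ≥ 1, y k ∈ X ∧ f (y k) ≤ f ((1 - γ k) • y (k - 1) + γ k • x k))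
    (Ψ : ℕ → E → ℝ)
    (hΨ : ∀ k ≥ 1, ∀ v, Ψ k v =
      (Θ k)⁻¹ * ∑ i ∈ Finset.Icc 1 k, θ i * (f (z (i - 1)) + f' (z (i - 1)) (v - z (i - 1)))) :
    ∀ k ≥ 1,
      (∀ u ∈ X, Ψ k (x k) ≤ f u ∧ f (y k) - f u ≤ 2 * L * DX ^ 2 / (k + 1)) ∧
      f (y k) - Ψ k (x k) ≤
        2 * L / (k * (k + 1)) * ∑ i ∈ Finset.Icc 1 k, ‖x i - x (i - 1)‖ ^ 2 ∧
      2 * L / (k * (k + 1)) * ∑ i ∈ Finset.Icc 1 k, ‖x i - x (i - 1)‖ ^ 2 ≤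
        2 * L * DX ^ 2 / (k + 1) :=
  stmt18_general X hXcv DX hDX f f' L hL hconv hder hsmooth θ Θ hθ hΘ γ hγ hθγ x y z hx0 hy0 hz hxk
    hyk Ψ hΨ
end

section
/- Consider the primal-dual averaging conditional gradient method: θ_k > 0 with θ_k/Θ_k = γ_k := 2/(k+1), Θ_k := Σ_{i=1}^k θ_i; x₀ = y₀ ∈ X; for k ≥ 1, z_{k−1} := ((k−1)/(k+1)) y_{k−1} + (2/(k+1)) x_{k−1}, p_k := Θ_k^{-1} Σ_{i=1}^k θ_i f'(z_{i−1}), x_k ∈ argmin_{x∈X} p_k(x), and y_k ∈ X with f(y_k) ≤ f((1−γ_k) y_{k−1} + γ_k x_k). Let x* be a minimizer of f over X and set G := ‖f'(x*)‖_* + L D_X. Then: (i) ‖p_k − p_{k−1}‖_* ≤ 2 γ_k G for all k ≥ 2; and (ii) if moreover the linear optimization oracle satisfies ‖x_k − x_{k−1}‖ ≤ Q ‖p_k − p_{k−1}‖_*^ρ for all k ≥ 2, for some ρ ∈ (0,1] and Q > 0, then there is an absolute constant C > 0 such that for every k ≥ 1, f(y_k) − f(x*) ≤ C ( L D_X²/k²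 + L Q² G^{2ρ} · S_ρ(k)/k² ), where S_ρ(k) := k^{1−2ρ}/(1−2ρ) if ρ ∈ (0, 1/2), S_ρ(k) := log(k+1) if ρ = 1/2, and S_ρ(k) := 1/(2ρ−1) if ρ ∈ (1/2, 1]. -/
/-!
Every admissible weight sequence is proportional to `θ_i = i`, so `p_k` is the average of the
`f'(z_{i-1})` with weights `i`, and `p_{k+1} - p_k = γ_{k+1} (f'(z_k) - p_k)`. As all gradients
on `X` are bounded by `G`, this gives (i).

For (ii), let `Φ_k(v) = ∑_{i ≤ k} i (f(z_{i-1}) + f'(z_{i-1})(v - z_{i-1}))`. By convexity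
`Φ_k ≤ Θ_k f` on `X`, and `x_k` minimizes `Φ_k` over `X` because `Φ_k` is `Θ_k p_k` up to a
constant. Smoothness turns one conditional gradient step into
`Θ_k f(y_k) ≤ Φ_k(x_k) + L ∑_{i ≤ k} ‖x_i - x_{i-1}‖²`, hence
`f(y_k) - f(x*) ≤ 2L/(k(k+1)) ∑_{i ≤ k} ‖x_i - x_{i-1}‖²`. The oracle and (i) bound
`‖x_i - x_{i-1}‖²` by a multiple of `Q² G^{2ρ} i^{-2ρ}`, and comparing `∑ i^{-2ρ}` with
`∫ t^{-2ρ}` gives `S_ρ(k)`.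
-/

open Finset

theorem sum_range_cast_add_one (k : ℕ) : ∑ j ∈ range k, ((j : ℝ) + 1) = k * (k + 1) / 2 := by
  induction k with
  | zero => simp
  | succ n ih => rw [sum_range_succ, ih]; push_cast; ring

theorem sum_Icc_one_eq_sum_range {M : Type*} [AddCommMonoid M] (F : ℕ → M) (k : ℕ) :
    ∑ i ∈ Icc 1 k, F i = ∑ j ∈ range k, F (j + 1) := by
  rw [← Finset.Ico_add_one_right_eq_Icc, Finset.sum_Ico_eq_sum_range]
  simp [add_comm]

noncomputable def holderRate (ρ : ℝ) (k : ℕ) : ℝ :=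
  if ρ < 1 / 2 then (k : ℝ) ^ (1 - 2 * ρ) / (1 - 2 * ρ)
  else if ρ = 1 / 2 then Real.log ((k : ℝ) + 1) else 1 / (2 * ρ - 1)

theorem sum_range_rpow_neg_le {s : ℝ} (hs : 0 ≤ s) (n : ℕ) :
    ∑ j ∈ range (n + 1), ((j : ℝ) + 1) ^ (-s) ≤ 1 + ∫ t in (1 : ℝ)..n + 1, t ^ (-s) := by
  have hanti : AntitoneOn (fun t : ℝ => t ^ (-s)) (Set.Icc 1 (1 + n)) := fun a ha b _ hab =>
    Real.rpow_le_rpow_of_nonpos (by linarith [ha.1]) hab (by linarith)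
  have := hanti.sum_le_integral
  rw [sum_range_succ']
  push_cast at this ⊢
  simp only [zero_add, Real.one_rpow, add_comm (1 : ℝ) n] at this ⊢
  convert add_le_add_right this 1 using 1
  simp only [add_comm (1 : ℝ)]

theorem sum_range_rpow_le_holderRate {ρ : ℝ} (hρ0 : 0 < ρ) (hρ1 : ρ ≤ 1) (n : ℕ) :
    ∑ j ∈ range (n + 1), ((j : ℝ) + 1) ^ (-(2 * ρ)) ≤ 3 * holderRate ρ (n + 1) := by
  have hsum := sum_range_rpow_neg_le (by positivity : 0 ≤ 2 * ρ) n
  have hk : (1 : ℝ) ≤ n + 1 := by linarith [n.cast_nonneg (α := ℝ)]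
  have h0 : (0 : ℝ) ∉ Set.uIcc 1 ((n : ℝ) + 1) := by
    rw [Set.uIcc_of_le hk]; exact fun h => by linarith [h.1]
  unfold holderRate
  push_cast
  split_ifs with hlt heq
  · have hint := integral_rpow (a := 1) (b := (n : ℝ) + 1) (r := -(2 * ρ)) (Or.inl (by linarith))
    have hpow : 1 ≤ ((n : ℝ) + 1) ^ (1 - 2 * ρ) := Real.one_le_rpow hk (by linarith)
    rw [Real.one_rpow, show -(2 * ρ) + 1 = 1 - 2 * ρ by ring] at hint
    have : ((n : ℝ) + 1) ^ (1 - 2 * ρ) ≤ ((n : ℝ) + 1) ^ (1 - 2 * ρ) / (1 - 2 * ρ) :=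
      le_div_self (by positivity) (by linarith) (by linarith)
    have : (((n : ℝ) + 1) ^ (1 - 2 * ρ) - 1) / (1 - 2 * ρ) ≤
        ((n : ℝ) + 1) ^ (1 - 2 * ρ) / (1 - 2 * ρ) := by gcongr; linarith; linarith
    linarith
  · subst heq
    have hint := integral_inv (a := 1) (b := (n : ℝ) + 1) h0
    norm_num [Real.rpow_neg_one] at hint hsum ⊢
    have hlog2 := Real.log_two_gt_d9
    have : Real.log 2 ≤ Real.log ((n : ℝ) + 1 + 1) := Real.log_le_log (by norm_num) (by linarith)
    have : Real.log ((n : ℝ) + 1) ≤ Real.log ((n : ℝ) + 1 + 1) :=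
      Real.log_le_log (by linarith) (by linarith)
    linarith
  · have hgt : 1 / 2 < ρ := lt_of_le_of_ne (not_lt.mp hlt) (Ne.symm heq)
    have hint := integral_rpow (a := 1) (b := (n : ℝ) + 1) (r := -(2 * ρ))
      (Or.inr ⟨by linarith, h0⟩)
    rw [Real.one_rpow, show -(2 * ρ) + 1 = -(2 * ρ - 1) by ring] at hint
    have hpow : 0 ≤ ((n : ℝ) + 1) ^ (-(2 * ρ - 1)) := by positivity
    have : (((n : ℝ) + 1) ^ (-(2 * ρ - 1)) - 1) / -(2 * ρ - 1) ≤ 1 / (2 * ρ - 1) := by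
      rw [div_neg, ← neg_div, neg_sub]; gcongr; linarith; linarith
    have : 1 ≤ 2 * (1 / (2 * ρ - 1)) := by
      rw [← mul_div_assoc, mul_one, le_div_iff₀ (by linarith)]; linarith
    linarith

theorem sq_le_of_le_mul_rpow {s t Q G ρ : ℝ} (hs0 : 0 ≤ s) (ht0 : 0 ≤ t)
    (hρ0 : 0 < ρ) (hρ1 : ρ ≤ 1) (hs : s ≤ Q * t ^ ρ) {j : ℕ} (ht : t ≤ 2 * (2 / (j + 2)) * G) :
    s ^ 2 ≤ 16 * Q ^ 2 * G ^ (2 * ρ) * ((j : ℝ) + 1) ^ (-(2 * ρ)) := by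
  have hj : (0 : ℝ) < j + 1 := by positivity
  have hG : 0 ≤ G := nonneg_of_mul_nonneg_right (ht0.trans ht) (by positivity)
  have ht' : t ≤ 4 * G * ((j : ℝ) + 1)⁻¹ :=
    calc t ≤ 4 * G * ((j : ℝ) + 2)⁻¹ := ht.trans_eq (by ring)
      _ ≤ 4 * G * ((j : ℝ) + 1)⁻¹ := by gcongr; linarith
  have h4 : (4 : ℝ) ^ (2 * ρ) ≤ 16 := by
    calc (4 : ℝ) ^ (2 * ρ) ≤ 4 ^ (2 : ℝ) :=
          Real.rpow_le_rpow_of_exponent_le (by norm_num) (by linarith)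
      _ = 16 := by norm_num
  calc s ^ 2 ≤ (Q * t ^ ρ) ^ 2 := pow_le_pow_left₀ hs0 hs 2
    _ = Q ^ 2 * t ^ (2 * ρ) := by
        rw [mul_pow, ← Real.rpow_natCast (t ^ ρ), ← Real.rpow_mul ht0, mul_comm ρ]; norm_num
    _ ≤ Q ^ 2 * (4 * G * ((j : ℝ) + 1)⁻¹) ^ (2 * ρ) := by gcongr
    _ = Q ^ 2 * (4 ^ (2 * ρ) * G ^ (2 * ρ) * ((j : ℝ) + 1) ^ (-(2 * ρ))) := by
        rw [Real.mul_rpow (by positivity) (by positivity), Real.mul_rpow (by norm_num) hG,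
          Real.inv_rpow hj.le, Real.rpow_neg hj.le]
    _ ≤ 16 * Q ^ 2 * G ^ (2 * ρ) * ((j : ℝ) + 1) ^ (-(2 * ρ)) := by
        rw [← mul_assoc, ← mul_assoc, mul_comm (Q ^ 2)]
        gcongr

theorem sum_sq_le_holderRate {s : ℕ → ℝ} {D c ρ : ℝ} (hρ0 : 0 < ρ) (hρ1 : ρ ≤ 1) (hc : 0 ≤ c)
    (hs0 : s 0 ^ 2 ≤ D ^ 2) (hs : ∀ j, 1 ≤ j → s j ^ 2 ≤ c * ((j : ℝ) + 1) ^ (-(2 * ρ)))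
    {k : ℕ} (hk : 1 ≤ k) : ∑ j ∈ range k, s j ^ 2 ≤ D ^ 2 + 3 * c * holderRate ρ k := by
  obtain ⟨n, rfl⟩ : ∃ n, k = n + 1 := ⟨k - 1, by omega⟩
  have hterm : ∀ j ∈ range (n + 1),
      s j ^ 2 ≤ (if j = 0 then D ^ 2 else 0) + c * ((j : ℝ) + 1) ^ (-(2 * ρ)) := by
    intro j _
    rcases Nat.eq_zero_or_pos j with rfl | hj
    · have : 0 ≤ c * ((0 : ℕ) + 1 : ℝ) ^ (-(2 * ρ)) := by positivity
      simp only [if_true]; linarith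
    · simpa [hj.ne'] using hs j hj
  refine (sum_le_sum hterm).trans ?_
  rw [sum_add_distrib, sum_ite_eq', if_pos (by simp), ← mul_sum, mul_comm 3 c, mul_assoc]
  gcongr
  exact sum_range_rpow_le_holderRate hρ0 hρ1 n

theorem holderRate_nonneg (ρ : ℝ) (k : ℕ) : 0 ≤ holderRate ρ k := by
  unfold holderRate
  split_ifs with hlt heq
  · exact div_nonneg (by positivity) (by linarith)
  · exact Real.log_nonneg (by linarith [k.cast_nonneg (α := ℝ)])
  · exact one_div_nonneg.mpr (by linarith [lt_of_le_of_ne (not_lt.mp hlt) (Ne.symm heq)])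

theorem le_two_mul_div_sq_of_tri_mul_le {e B : ℝ} {k : ℕ} (hk : 1 ≤ k) (hB : 0 ≤ B)
    (h : k * (k + 1) / 2 * e ≤ B) : e ≤ 2 * B / k ^ 2 := by
  have hk0 : (1 : ℝ) ≤ k := by exact_mod_cast hk
  rw [le_div_iff₀ (by positivity)]
  nlinarith

theorem ConvexOn.add_apply_sub_le {E : Type*} [NormedAddCommGroup E] [NormedSpace ℝ E]
    {X : Set E} {f : E → ℝ} {f' : E →L[ℝ] ℝ} {a b : E} (hf : ConvexOn ℝ X f) (ha : a ∈ X)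
    (hb : b ∈ X) (hf' : HasFDerivAt f f' a) : f a + f' (b - a) ≤ f b := by
  let ℓ : ℝ →ᵃ[ℝ] E := AffineMap.lineMap a b
  have hline : HasDerivAt (f ∘ ℓ) (f' (b - a)) 0 :=
    hf'.comp_hasDerivAt_of_eq _ AffineMap.hasDerivAt_lineMap (by simp [ℓ])
  have := (hf.comp_affineMap ℓ).le_slope_of_hasDerivAt
    (by simpa [ℓ] using ha) (by simpa [ℓ] using hb) one_pos hline
  simp only [slope_def_field, Function.comp_apply, ℓ, AffineMap.lineMap_apply_zero,
    AffineMap.lineMap_apply_one, sub_zero, div_one] at this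
  linarith

/-- `linAvg g k = Θ_k⁻¹ ∑_{i ≤ k} θ_i g_{i-1}` for the weights `θ_i = i`; any weights with
`θ_k / Θ_k = 2 / (k + 1)` are proportional to these (`inv_smul_sum_eq_linAvg`). -/
noncomputable def linAvg {V : Type*} [AddCommGroup V] [Module ℝ V] (g : ℕ → V) (k : ℕ) : V :=
  (2 / (k * (k + 1)) : ℝ) • ∑ j ∈ range k, ((j : ℝ) + 1) • g j

section linAvg

variable {V : Type*}

theorem linAvg_succ_sub [AddCommGroup V] [Module ℝ V] (g : ℕ → V) (k : ℕ) :
    linAvg g (k + 1) - linAvg g k = (2 / (k + 2) : ℝ) • (g k - linAvg g k) := by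
  have hsum : ∑ j ∈ range k, ((j : ℝ) + 1) • g j = (k * (k + 1) / 2 : ℝ) • linAvg g k := by
    rcases Nat.eq_zero_or_pos k with rfl | hk
    · simp
    · have : (k : ℝ) ≠ 0 := by positivity
      rw [linAvg, smul_smul]
      field_simp
      simp
  rw [linAvg, sum_range_succ, hsum]
  push_cast
  have : ((k : ℝ) + 2) ≠ 0 := by positivity
  have : ((k : ℝ) + 1) ≠ 0 := by positivity
  match_scalars <;> field_simp <;> ring

theorem norm_linAvg_le [SeminormedAddCommGroup V] [NormedSpace ℝ V] {g : ℕ → V} {G : ℝ}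
    (hg : ∀ j, ‖g j‖ ≤ G) (k : ℕ) : ‖linAvg g k‖ ≤ G := by
  have hG : 0 ≤ G := (norm_nonneg _).trans (hg 0)
  rcases Nat.eq_zero_or_pos k with rfl | hk
  · simpa [linAvg] using hG
  calc ‖linAvg g k‖ ≤ (2 / (k * (k + 1)) : ℝ) * ∑ j ∈ range k, ((j : ℝ) + 1) * G := by
        rw [linAvg, norm_smul, Real.norm_of_nonneg (by positivity)]
        gcongr
        refine (norm_sum_le _ _).trans (sum_le_sum fun j _ => ?_)
        rw [norm_smul, Real.norm_of_nonneg (by positivity)]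
        gcongr
        exact hg j
    _ = G := by
        rw [← sum_mul, sum_range_cast_add_one]
        field_simp

theorem norm_linAvg_succ_sub_le [SeminormedAddCommGroup V] [NormedSpace ℝ V] {g : ℕ → V}
    {G : ℝ} (hg : ∀ j, ‖g j‖ ≤ G) (k : ℕ) :
    ‖linAvg g (k + 1) - linAvg g k‖ ≤ 2 * (2 / (k + 2)) * G := by
  rw [linAvg_succ_sub, norm_smul, Real.norm_of_nonneg (by positivity), mul_comm 2, mul_assoc]
  gcongr
  exact (norm_sub_le _ _).trans (by linarith [hg k, norm_linAvg_le hg k])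

end linAvg

theorem partialSum_eq_of_ratio {θ Θ : ℕ → ℝ} (hΘ : ∀ k, Θ k = ∑ i ∈ Icc 1 k, θ i)
    (hratio : ∀ k ≥ 1, θ k / Θ k = 2 / (k + 1)) (k : ℕ) : Θ k = θ 1 * (k * (k + 1) / 2) := by
  induction k with
  | zero => simp [hΘ]
  | succ k ih =>
    have hrec : Θ (k + 1) = Θ k + θ (k + 1) := by rw [hΘ, hΘ, sum_Icc_succ_top (by omega)]
    rcases Nat.eq_zero_or_pos k with rfl | hk
    · simp [hrec, hΘ]
    have hne : Θ (k + 1) ≠ 0 := by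
      intro h
      have := hratio (k + 1) (by omega)
      rw [h, div_zero] at this
      have : (0 : ℝ) < 2 / ((k + 1 : ℕ) + 1) := by positivity
      linarith
    have hθ := hratio (k + 1) (by omega)
    rw [div_eq_iff hne] at hθ
    have hk' : (k : ℝ) ≠ 0 := by positivity
    push_cast at hθ ⊢
    field_simp at hθ
    apply mul_left_cancel₀ hk'
    linear_combination (↑k + 2) * hrec + (↑k + 2) * ih + hθ

theorem inv_smul_sum_eq_linAvg {V : Type*} [AddCommGroup V] [Module ℝ V] {θ Θ : ℕ → ℝ}
    (hΘ : ∀ k, Θ k = ∑ i ∈ Icc 1 k, θ i) (hratio : ∀ k ≥ 1, θ k / Θ k = 2 / (k + 1))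
    (g : ℕ → V) (k : ℕ) : (Θ k)⁻¹ • ∑ i ∈ Icc 1 k, θ i • g (i - 1) = linAvg g k := by
  have hΘeq := partialSum_eq_of_ratio hΘ hratio
  have hθ1 : θ 1 ≠ 0 := by
    intro h
    have := hratio 1 le_rfl
    rw [h, zero_div] at this
    norm_num at this
  have hθ : ∀ j : ℕ, θ (j + 1) = θ 1 * (j + 1) := by
    intro j
    have hrec : Θ (j + 1) = Θ j + θ (j + 1) := by rw [hΘ, hΘ, sum_Icc_succ_top (by omega)]
    rw [hΘeq, hΘeq] at hrec
    push_cast at hrec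
    linear_combination -hrec
  rw [sum_Icc_one_eq_sum_range, linAvg, hΘeq]
  have hsum : ∑ j ∈ range k, θ (j + 1) • g (j + 1 - 1)
      = θ 1 • ∑ j ∈ range k, ((j : ℝ) + 1) • g j := by
    rw [smul_sum]
    exact sum_congr rfl fun j _ => by rw [hθ, mul_smul, add_tsub_cancel_right]
  rw [hsum, smul_smul]
  congr 1
  rcases Nat.eq_zero_or_pos k with rfl | hk
  · simp
  · have : (k : ℝ) ≠ 0 := by positivity
    field_simp

section ConditionalGradient

variable {E : Type*} [NormedAddCommGroup E] [NormedSpace ℝ E] {X : Set E} {f : E → ℝ}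
  {f' : E → E →L[ℝ] ℝ} {L : ℝ}

theorem two_div_cast_add_two_le_one (k : ℕ) : (2 / (k + 2) : ℝ) ≤ 1 := by
  rw [div_le_one (by positivity)]
  linarith [k.cast_nonneg (α := ℝ)]

theorem Convex.sub_two_div_smul_add_mem (hX : Convex ℝ X) {x y : E} (hy : y ∈ X) (hx : x ∈ X)
    (k : ℕ) : (1 - 2 / (k + 2) : ℝ) • y + (2 / (k + 2) : ℝ) • x ∈ X :=
  hX hy hx (by linarith [two_div_cast_add_two_le_one k]) (by positivity) (by ring)

theorem le_of_conditionalGradient_step (hX : Convex ℝ X) (hf : ConvexOn ℝ X f)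
    (hf' : ∀ a ∈ X, HasFDerivAt f (f' a) a)
    (hsmooth : ∀ a ∈ X, ∀ b ∈ X, f b ≤ f a + f' a (b - a) + L / 2 * ‖b - a‖ ^ 2)
    {x x' y z : E} (hx : x ∈ X) (hx' : x' ∈ X) (hy : y ∈ X) {γ : ℝ} (hγ0 : 0 ≤ γ) (hγ1 : γ ≤ 1)
    (hz : z = (1 - γ) • y + γ • x) :
    f ((1 - γ) • y + γ • x') ≤
      (1 - γ) * f y + γ * (f z + f' z (x' - z)) + L / 2 * γ ^ 2 * ‖x' - x‖ ^ 2 := by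
  have hzX : z ∈ X := hz ▸ hX hy hx (by linarith) hγ0 (by ring)
  have hbX : (1 - γ) • y + γ • x' ∈ X := hX hy hx' (by linarith) hγ0 (by ring)
  have hstep : (1 - γ) • y + γ • x' - z = γ • (x' - x) := by rw [hz]; module
  have hsplit : (1 - γ) • y + γ • x' - z = (1 - γ) • (y - z) + γ • (x' - z) := by
    rw [hz]; module
  have hsm := hsmooth z hzX _ hbX
  have hlin : f' z ((1 - γ) • y + γ • x' - z) = (1 - γ) * f' z (y - z) + γ * f' z (x' - z) := by
    rw [hsplit, map_add, map_smul, map_smul, smul_eq_mul, smul_eq_mul]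
  rw [hlin, hstep, norm_smul, Real.norm_of_nonneg hγ0] at hsm
  have hgrad := hf.add_apply_sub_le hzX hy (hf' z hzX)
  nlinarith [mul_le_mul_of_nonneg_left hgrad (by linarith : 0 ≤ 1 - γ)]

noncomputable def linModel (f : E → ℝ) (f' : E → E →L[ℝ] ℝ) (z : ℕ → E) (k : ℕ) (v : E) : ℝ :=
  ∑ j ∈ range k, ((j : ℝ) + 1) * (f (z j) + f' (z j) (v - z j))

theorem linModel_eq (z : ℕ → E) (k : ℕ) (v : E) :
    linModel f f' z k v = ∑ j ∈ range k, ((j : ℝ) + 1) * (f (z j) - f' (z j) (z j)) +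
      k * (k + 1) / 2 * linAvg (fun j => f' (z j)) k v := by
  have hscale : (k * (k + 1) / 2 : ℝ) * (2 / (k * (k + 1))) * ∑ j ∈ range k,
      ((j : ℝ) + 1) * f' (z j) v = ∑ j ∈ range k, ((j : ℝ) + 1) * f' (z j) v := by
    rcases Nat.eq_zero_or_pos k with rfl | hk
    · simp
    · have : (k : ℝ) ≠ 0 := by positivity
      field_simp
  simp only [linModel, linAvg, _root_.smul_apply, _root_.sum_apply,
    smul_eq_mul, ← mul_assoc, hscale, ← sum_add_distrib, map_sub]
  exact sum_congr rfl fun j _ => by ring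

theorem linModel_le_linModel {z : ℕ → E} {k : ℕ} {a b : E}
    (h : linAvg (fun j => f' (z j)) k a ≤ linAvg (fun j => f' (z j)) k b) :
    linModel f f' z k a ≤ linModel f f' z k b := by
  rw [linModel_eq, linModel_eq]
  gcongr

theorem linModel_le (hf : ConvexOn ℝ X f) (hf' : ∀ a ∈ X, HasFDerivAt f (f' a) a)
    {z : ℕ → E} (hz : ∀ j, z j ∈ X) (k : ℕ) {v : E} (hv : v ∈ X) :
    linModel f f' z k v ≤ k * (k + 1) / 2 * f v := by
  rw [linModel, ← sum_range_cast_add_one, sum_mul]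
  gcongr with j
  exact hf.add_apply_sub_le (hz j) hv (hf' _ (hz j))

/-- The iterates of PDA-CndG, with `p_k` written as `linAvg (fun j => f' (z j)) k`. -/
structure IsPDACndG (X : Set E) (f : E → ℝ) (f' : E → E →L[ℝ] ℝ) (x y z : ℕ → E) : Prop where
  x_mem : ∀ k, x k ∈ X
  y_mem : ∀ k, y k ∈ X
  z_eq : ∀ k : ℕ, z k = (1 - 2 / (k + 2) : ℝ) • y k + (2 / (k + 2) : ℝ) • x k
  f_y_le : ∀ k : ℕ,
    f (y (k + 1)) ≤ f ((1 - 2 / (k + 2) : ℝ) • y k + (2 / (k + 2) : ℝ) • x (k + 1))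
  isMinOn_x : ∀ k, IsMinOn ⇑(linAvg (fun j => f' (z j)) k : E →L[ℝ] ℝ) X (x k)

namespace IsPDACndG

variable {x y z : ℕ → E}

theorem z_mem (h : IsPDACndG X f f' x y z) (hX : Convex ℝ X) (k : ℕ) : z k ∈ X :=
  h.z_eq k ▸ hX.sub_two_div_smul_add_mem (h.y_mem k) (h.x_mem k) k

theorem tri_mul_le_linModel_add (h : IsPDACndG X f f' x y z) (hX : Convex ℝ X)
    (hf : ConvexOn ℝ X f) (hf' : ∀ a ∈ X, HasFDerivAt f (f' a) a)
    (hsmooth : ∀ a ∈ X, ∀ b ∈ X, f b ≤ f a + f' a (b - a) + L / 2 * ‖b - a‖ ^ 2) (hL : 0 ≤ L)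
    (k : ℕ) :
    k * (k + 1) / 2 * f (y k) ≤
      linModel f f' z k (x k) + L * ∑ j ∈ range k, ‖x (j + 1) - x j‖ ^ 2 := by
  induction k with
  | zero => simp [linModel]
  | succ k ih =>
    have hstep := (h.f_y_le k).trans (le_of_conditionalGradient_step hX hf hf' hsmooth
      (h.x_mem k) (h.x_mem (k + 1)) (h.y_mem k) (by positivity) (two_div_cast_add_two_le_one k)
      (h.z_eq k))
    have hmodel : linModel f f' z k (x k) ≤ linModel f f' z k (x (k + 1)) :=
      linModel_le_linModel (isMinOn_iff.mp (h.isMinOn_x k) _ (h.x_mem (k + 1)))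
    have hcoef : (k + 1 : ℝ) / (k + 2) ≤ 1 := by rw [div_le_one (by positivity)]; linarith
    have hk2 : (k : ℝ) + 2 ≠ 0 := by positivity
    rw [linModel, sum_range_succ, ← linModel, sum_range_succ]
    push_cast
    calc ((k : ℝ) + 1) * (k + 1 + 1) / 2 * f (y (k + 1))
        ≤ (k + 1) * (k + 2) / 2 * ((1 - 2 / (k + 2)) * f (y k) + 2 / (k + 2) *
            (f (z k) + f' (z k) (x (k + 1) - z k)) +
            L / 2 * (2 / (k + 2)) ^ 2 * ‖x (k + 1) - x k‖ ^ 2) := by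
          rw [show (k : ℝ) + 1 + 1 = k + 2 by ring]
          gcongr
      _ = k * (k + 1) / 2 * f (y k) + (k + 1) * (f (z k) + f' (z k) (x (k + 1) - z k)) +
            (k + 1) / (k + 2) * L * ‖x (k + 1) - x k‖ ^ 2 := by
          field_simp
          ring
      _ ≤ _ := by
          nlinarith [mul_le_mul_of_nonneg_right hcoef (mul_nonneg hL (sq_nonneg ‖x (k + 1) - x k‖))]

theorem tri_mul_sub_le (h : IsPDACndG X f f' x y z) (hX : Convex ℝ X)
    (hf : ConvexOn ℝ X f) (hf' : ∀ a ∈ X, HasFDerivAt f (f' a) a)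
    (hsmooth : ∀ a ∈ X, ∀ b ∈ X, f b ≤ f a + f' a (b - a) + L / 2 * ‖b - a‖ ^ 2) (hL : 0 ≤ L)
    (k : ℕ) {v : E} (hv : v ∈ X) :
    k * (k + 1) / 2 * (f (y k) - f v) ≤ L * ∑ j ∈ range k, ‖x (j + 1) - x j‖ ^ 2 := by
  have := h.tri_mul_le_linModel_add hX hf hf' hsmooth hL k
  have := (linModel_le_linModel (isMinOn_iff.mp (h.isMinOn_x k) v hv)).trans
    (linModel_le hf hf' (h.z_mem hX) k hv)
  linarith

theorem sub_le_holderRate (h : IsPDACndG X f f' x y z) (hX : Convex ℝ X)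
    (hf : ConvexOn ℝ X f) (hf' : ∀ a ∈ X, HasFDerivAt f (f' a) a)
    (hsmooth : ∀ a ∈ X, ∀ b ∈ X, f b ≤ f a + f' a (b - a) + L / 2 * ‖b - a‖ ^ 2) (hL : 0 ≤ L)
    {DX : ℝ} (hdiam : ∀ a ∈ X, ∀ b ∈ X, ‖a - b‖ ≤ DX) {G : ℝ} (hgrad : ∀ j, ‖f' (z j)‖ ≤ G)
    {ρ Q : ℝ} (hρ : ρ ∈ Set.Ioc 0 1)
    (horacle : ∀ j ≥ 1, ‖x (j + 1) - x j‖ ≤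
      Q * ‖linAvg (fun j => f' (z j)) (j + 1) - linAvg (fun j => f' (z j)) j‖ ^ ρ)
    {v : E} (hv : v ∈ X) {k : ℕ} (hk : 1 ≤ k) :
    f (y k) - f v ≤
      96 * (L * DX ^ 2 / k ^ 2 + L * Q ^ 2 * G ^ (2 * ρ) * holderRate ρ k / k ^ 2) := by
  have hG : 0 ≤ G := (norm_nonneg _).trans (hgrad 0)
  have hsteps : ∀ j, 1 ≤ j →
      ‖x (j + 1) - x j‖ ^ 2 ≤ 16 * Q ^ 2 * G ^ (2 * ρ) * ((j : ℝ) + 1) ^ (-(2 * ρ)) :=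
    fun j hj => sq_le_of_le_mul_rpow (norm_nonneg _) (norm_nonneg _) hρ.1 hρ.2 (horacle j hj)
      (norm_linAvg_succ_sub_le hgrad j)
  have hsum := sum_sq_le_holderRate (s := fun j => ‖x (j + 1) - x j‖) hρ.1 hρ.2 (by positivity)
    (pow_le_pow_left₀ (norm_nonneg _) (hdiam _ (h.x_mem 1) _ (h.x_mem 0)) 2) hsteps hk
  have hS := holderRate_nonneg ρ k
  calc f (y k) - f v
      ≤ 2 * (L * (DX ^ 2 + 3 * (16 * Q ^ 2 * G ^ (2 * ρ)) * holderRate ρ k)) / k ^ 2 :=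
        le_two_mul_div_sq_of_tri_mul_le hk (by positivity)
          ((h.tri_mul_sub_le hX hf hf' hsmooth hL k hv).trans (by gcongr))
    _ ≤ _ := by
        have : 0 ≤ L * Q ^ 2 * G ^ (2 * ρ) * holderRate ρ k := by positivity
        rw [← add_div, mul_div_assoc']
        refine div_le_div_of_nonneg_right ?_ (by positivity)
        nlinarith [mul_nonneg hL (sq_nonneg DX)]

end IsPDACndG

end ConditionalGradient

/-- For the PDA-CndG method with `p_k = Θ_k^{-1} ∑_{i=1}^k θ_i f'(z_{i−1})`
and `G = ‖f'(x*)‖_* + L D_X`: (i) `‖p_k − p_{k−1}‖_* ≤ 2 γ_k G` for all `k ≥ 2`; and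
(ii) there is an absolute constant `C > 0` such that, if moreover the oracle is Hölder
continuous, `‖x_k − x_{k−1}‖ ≤ Q ‖p_k − p_{k−1}‖_*^ρ` for `k ≥ 2` (`ρ ∈ (0,1]`, `Q > 0`),
then `f(y_k) − f(x*) ≤ C (L D_X²/k² + L Q² G^{2ρ} S_ρ(k)/k²)` for all `k ≥ 1`, where
`S_ρ(k) = k^{1−2ρ}/(1−2ρ)` if `ρ < 1/2`, `S_ρ(k) = log(k+1)` if `ρ = 1/2`, and
`S_ρ(k) = 1/(2ρ−1)` if `ρ > 1/2`. -/
theorem stmt19 : ∃ C : ℝ, 0 < C ∧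
    ∀ (E : Type) [NormedAddCommGroup E] [NormedSpace ℝ E] [FiniteDimensional ℝ E]
      (X : Set E), IsCompact X → Convex ℝ X → X.Nonempty →
    ∀ (DX : ℝ), IsGreatest {d : ℝ | ∃ a ∈ X, ∃ b ∈ X, d = ‖a - b‖} DX →
    ∀ (f : E → ℝ) (f' : E → E →L[ℝ] ℝ) (L : ℝ), 0 < L →
      ConvexOn ℝ X f →
      (∀ a ∈ X, HasFDerivAt f (f' a) a) →
      (∀ a ∈ X, ∀ b ∈ X, f b ≤ f a + f' a (b - a) + L / 2 * ‖b - a‖ ^ 2) →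
      (∀ a ∈ X, ∀ b ∈ X, ‖f' a - f' b‖ ≤ L * ‖a - b‖) →
    ∀ (θ Θ : ℕ → ℝ), (∀ k ≥ 1, 0 < θ k) →
      (∀ k : ℕ, Θ k = ∑ i ∈ Finset.Icc 1 k, θ i) →
    ∀ (γ : ℕ → ℝ), (∀ k : ℕ, γ k = 2 / (k + 1)) →
      (∀ k ≥ 1, θ k / Θ k = γ k) →
    ∀ (x y z : ℕ → E) (p : ℕ → E →L[ℝ] ℝ),
      x 0 ∈ X → y 0 = x 0 →
      (∀ k ≥ 1, z (k - 1) =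
        (((k : ℝ) - 1) / ((k : ℝ) + 1)) • y (k - 1) + (2 / ((k : ℝ) + 1)) • x (k - 1)) →
      (∀ k ≥ 1, p k = (Θ k)⁻¹ • ∑ i ∈ Finset.Icc 1 k, θ i • f' (z (i - 1))) →
      (∀ k ≥ 1, x k ∈ X ∧ ∀ v ∈ X, p k (x k) ≤ p k v) →
      (∀ k ≥ 1, y k ∈ X ∧ f (y k) ≤ f ((1 - γ k) • y (k - 1) + γ k • x k)) →
    ∀ (xstar : E), xstar ∈ X → (∀ v ∈ X, f xstar ≤ f v) →
      (∀ k ≥ 2, ‖p k - p (k - 1)‖ ≤ 2 * γ k * (‖f' xstar‖ + L * DX)) ∧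
      (∀ (ρ Q : ℝ), ρ ∈ Set.Ioc (0 : ℝ) 1 → 0 < Q →
        (∀ k ≥ 2, ‖x k - x (k - 1)‖ ≤ Q * ‖p k - p (k - 1)‖ ^ ρ) →
        ∀ k ≥ 1,
          f (y k) - f xstar ≤ C * (L * DX ^ 2 / (k : ℝ) ^ 2 +
            L * Q ^ 2 * (‖f' xstar‖ + L * DX) ^ (2 * ρ) *
              (if ρ < 1 / 2 then (k : ℝ) ^ (1 - 2 * ρ) / (1 - 2 * ρ)
               else if ρ = 1 / 2 then Real.log ((k : ℝ) + 1)
               else 1 / (2 * ρ - 1)) / (k : ℝ) ^ 2)) := by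
  refine ⟨96, by norm_num, ?_⟩
  intro E _ _ _ X _ hX _ DX hDX f f' L hL hf hf' hsmooth hlip θ Θ _ hΘ γ hγ hratio
    x y z p hx0 hy0 hz hp hx hy xstar hxstar _
  have hdiam : ∀ a ∈ X, ∀ b ∈ X, ‖a - b‖ ≤ DX := fun a ha b hb => hDX.2 ⟨a, ha, b, hb, rfl⟩
  have hγ' : ∀ j : ℕ, γ (j + 1) = 2 / (j + 2) := fun j => by rw [hγ]; push_cast; ring
  have hp' : ∀ k ≥ 1, p k = linAvg (fun j => f' (z j)) k := fun k hk =>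
    (hp k hk).trans (inv_smul_sum_eq_linAvg hΘ (fun k hk => (hratio k hk).trans (hγ k))
      (fun j => f' (z j)) k)
  have hM : IsPDACndG X f f' x y z :=
    { x_mem := fun k => Nat.casesOn k hx0 fun j => (hx (j + 1) j.succ_pos).1
      y_mem := fun k => Nat.casesOn k (hy0 ▸ hx0) fun j => (hy (j + 1) j.succ_pos).1
      z_eq := fun j => by
        rw [← Nat.add_sub_cancel j 1, hz (j + 1) j.succ_pos, Nat.add_sub_cancel]
        push_cast
        congr 2 <;> field_simp <;> ring
      f_y_le := fun j => by simpa only [hγ', Nat.add_sub_cancel] using (hy (j + 1) j.succ_pos).2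
      isMinOn_x := fun
        | 0 => by simp [linAvg, IsMinOn, IsMinFilter]
        | k + 1 => hp' _ k.succ_pos ▸ isMinOn_iff.mpr (hx _ k.succ_pos).2 }
  have hgrad : ∀ j, ‖f' (z j)‖ ≤ ‖f' xstar‖ + L * DX := fun j => by
    have hzX := hM.z_mem hX j
    grw [norm_le_insert' (f' (z j)) (f' xstar), hlip _ hzX _ hxstar, hdiam _ hzX _ hxstar]
  refine ⟨fun k hk => ?_, fun ρ Q hρ _ horacle k hk => ?_⟩
  · obtain ⟨j, rfl⟩ : ∃ j, k = j + 1 := ⟨k - 1, by omega⟩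
    rw [Nat.add_sub_cancel, hp' _ (by omega), hp' j (by omega), hγ']
    exact norm_linAvg_succ_sub_le hgrad j
  · refine hM.sub_le_holderRate hX hf hf' hsmooth hL.le hdiam hgrad hρ (fun j hj => ?_) hxstar hk
    simpa only [Nat.add_sub_cancel, hp' _ (by omega : 1 ≤ j + 1), hp' j hj]
      using horacle (j + 1) (by omega)
end
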